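/- arXiv:1608.07727 — 13 statements merged into one kernel-verified Lean document; each statement's English description precedes it below -/
import Mathlib

section
/- For every positive integer s, there exists n = n(s) such that every bipartite graph G = (A, B, E) with |A| ≥ n and |B| ≥ n contains subsets A' ⊆ A and B' ⊆ B with |A'| = |B'| = s such that either every vertex of A' is adjacent to every vertex of B', or no vertex of A' is adjacent to any vertex of B'. -/
/-!
Choose vertices `a₁, …, a_{2s}` of `A` one at a time. Each `aᵢ` is adjacent either to at least
half or to at most half of the current candidate set in `B`; keep that half. After `2s` rounds,
starting from `s · 2^(2s)` candidates, at least `s` vertices of `B` remain, and each `aᵢ` is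
adjacent to all of them or to none. By pigeonhole, `s` of the `aᵢ` behave alike.
-/

open Finset

variable {α β : Type*} (E : α → β → Prop)

def IsHomogeneous (a : α) (T : Finset β) : Prop :=
  (∀ b ∈ T, E a b) ∨ ∀ b ∈ T, ¬ E a b

variable {E}

theorem IsHomogeneous.mono {a : α} {T T' : Finset β} (h : IsHomogeneous E a T) (hT' : T' ⊆ T) :
    IsHomogeneous E a T' :=
  h.imp (fun h b hb => h b (hT' hb)) (fun h b hb => h b (hT' hb))

theorem exists_isHomogeneous_half (a : α) (T : Finset β) :
    ∃ T' ⊆ T, #T ≤ 2 * #T' ∧ IsHomogeneous E a T' := by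
  classical
  have hsplit := card_filter_add_card_filter_not (s := T) (E a)
  by_cases h : #(T.filter (E a)) ≤ #(T.filter fun b => ¬ E a b)
  · exact ⟨_, filter_subset _ _, by omega, Or.inr fun b hb => (mem_filter.mp hb).2⟩
  · exact ⟨_, filter_subset _ _, by omega, Or.inl fun b hb => (mem_filter.mp hb).2⟩

theorem exists_isHomogeneous_family (s t : ℕ) (S : Finset α) (T : Finset β)
    (hS : t ≤ #S) (hT : s * 2 ^ t ≤ #T) :
    ∃ S' ⊆ S, #S' = t ∧ ∃ T' ⊆ T, s ≤ #T' ∧ ∀ a ∈ S', IsHomogeneous E a T' := by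
  classical
  induction t generalizing S T with
  | zero => exact ⟨∅, empty_subset _, rfl, T, Subset.rfl, by simpa using hT, by simp⟩
  | succ t ih =>
    obtain ⟨a, ha⟩ := card_pos.mp (Nat.lt_of_lt_of_le t.succ_pos hS)
    obtain ⟨T₁, hT₁, hT₁_card, ha_T₁⟩ := exists_isHomogeneous_half (E := E) a T
    have hS_erase : t ≤ #(S.erase a) := by rw [card_erase_of_mem ha]; omega
    have hT₁_large : s * 2 ^ t ≤ #T₁ := by rw [pow_succ, ← mul_assoc] at hT; omega
    obtain ⟨S', hS', rfl, T', hT', hT'_card, hhom⟩ := ih (S.erase a) T₁ hS_erase hT₁_large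
    have ha_S' : a ∉ S' := fun h => (mem_erase.mp (hS' h)).1 rfl
    refine ⟨insert a S', insert_subset ha (hS'.trans (erase_subset _ _)),
      card_insert_of_notMem ha_S', T', hT'.trans hT₁, hT'_card, ?_⟩
    rintro x hx
    rcases mem_insert.mp hx with rfl | hx
    · exact ha_T₁.mono hT'
    · exact hhom x hx

theorem exists_complete_or_empty_of_isHomogeneous (s : ℕ) (S : Finset α) (T : Finset β)
    (hS : 2 * s ≤ #S) (hT : s ≤ #T) (hhom : ∀ a ∈ S, IsHomogeneous E a T) :
    ∃ (A' : Finset α) (B' : Finset β), #A' = s ∧ #B' = s ∧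
      ((∀ a ∈ A', ∀ b ∈ B', E a b) ∨ (∀ a ∈ A', ∀ b ∈ B', ¬ E a b)) := by
  classical
  obtain ⟨B', hB', hB'_card⟩ := exists_subset_card_eq hT
  have hsplit := card_filter_add_card_filter_not (s := S) fun a => ∀ b ∈ T, E a b
  by_cases h : s ≤ #(S.filter fun a => ∀ b ∈ T, E a b)
  · obtain ⟨A', hA', hA'_card⟩ := exists_subset_card_eq h
    exact ⟨A', B', hA'_card, hB'_card,
      Or.inl fun a ha b hb => (mem_filter.mp (hA' ha)).2 b (hB' hb)⟩
  · obtain ⟨A', hA', hA'_card⟩ :=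
      exists_subset_card_eq (s := S.filter fun a => ¬ ∀ b ∈ T, E a b) (n := s) (by omega)
    refine ⟨A', B', hA'_card, hB'_card, Or.inr fun a ha b hb => ?_⟩
    obtain ⟨haS, ha_not_all⟩ := mem_filter.mp (hA' ha)
    exact (hhom a haS).resolve_left ha_not_all b (hB' hb)

theorem bipartite_ramsey_general (s : ℕ) :
    ∃ n : ℕ, ∀ (A B : Type) [Fintype A] [Fintype B] (E : A → B → Prop),
      n ≤ Fintype.card A → n ≤ Fintype.card B →
      ∃ (A' : Finset A) (B' : Finset B), A'.card = s ∧ B'.card = s ∧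
        ((∀ a ∈ A', ∀ b ∈ B', E a b) ∨ (∀ a ∈ A', ∀ b ∈ B', ¬ E a b)) := by
  refine ⟨max (2 * s) (s * 2 ^ (2 * s)), fun A B _ _ E hA hB => ?_⟩
  obtain ⟨S, -, hS_card, T, -, hT_card, hhom⟩ :=
    exists_isHomogeneous_family (E := E) s (2 * s) univ univ
      (by simpa using le_of_max_le_left hA) (by simpa using le_of_max_le_right hB)
  exact exists_complete_or_empty_of_isHomogeneous s S T hS_card.ge hT_card hhom

/-- Bipartite Ramsey theorem: for every positive integer `s` there is `n` such that every
bipartite graph with parts of size at least `n` contains either a complete or an empty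
`s × s` sub-bipartite-graph. -/
theorem bipartite_ramsey (s : ℕ) (hs : 0 < s) :
    ∃ n : ℕ, ∀ (A B : Type) [Fintype A] [Fintype B] (E : A → B → Prop),
      n ≤ Fintype.card A → n ≤ Fintype.card B →
      ∃ (A' : Finset A) (B' : Finset B), A'.card = s ∧ B'.card = s ∧
        ((∀ a ∈ A', ∀ b ∈ B', E a b) ∨ (∀ a ∈ A', ∀ b ∈ B', ¬ E a b)) :=
  bipartite_ramsey_general s
end

section
/- For every positive integer k, there exists N = N(k) such that every graph G containing both a clique of size N and an independent set of size N contains an induced subgraph isomorphic to S_k or to its complement, where S_k is the graph on 2k vertices consisting of a clique of size k together with k isolated vertices. -/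
/-!
Let `s` be a clique and `t` an independent set, both of size `N = k 2^(2k-1) + 2k`; they share
at most one vertex, so `t \ s` contains a set `T` of `2k - 1` vertices. Running through `T` and
keeping each time the larger of the two parts of the clique cut out by the neighbourhood of the
current vertex leaves at least `k` clique vertices `C` to which every vertex of `T` is either
completely joined or not joined at all. By pigeonhole, `k` vertices of `T` behave the same way;
together with `k` vertices of `C` they induce `S_k` (no edges across) or its complement (all
edges across).
-/

def SimpleGraph.IsIndepSet' {V : Type} (G : SimpleGraph V) (s : Set V) : Prop :=
  s.Pairwise fun a b => ¬ G.Adj a b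

/-- `Sgraph k` is the graph on `2k` vertices consisting of a clique of size `k`
(the left summand) together with `k` isolated vertices (the right summand). -/
def Sgraph (k : ℕ) : SimpleGraph (Fin k ⊕ Fin k) :=
  SimpleGraph.fromRel (fun u v => u.isLeft = true ∧ v.isLeft = true)

open Finset SimpleGraph

section Homogeneous

variable {α β : Type*}

lemma exists_homogeneous_subset_of_mul_two_pow_card_le (r : α → β → Prop) (k : ℕ)
    (T : Finset α) {C : Finset β} (hC : k * 2 ^ #T ≤ #C) :
    ∃ C' ⊆ C, k ≤ #C' ∧
      ∀ v ∈ T, (∀ u ∈ C', r v u) ∨ (∀ u ∈ C', ¬ r v u) := by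
  classical
  induction T using Finset.induction_on generalizing C with
  | empty => exact ⟨C, Subset.rfl, by simpa using hC, by simp⟩
  | insert v T hv ih =>
    obtain ⟨D, hDC, hD, hvD⟩ : ∃ D ⊆ C, k * 2 ^ #T ≤ #D ∧
        ((∀ u ∈ D, r v u) ∨ (∀ u ∈ D, ¬ r v u)) := by
      have hsplit := card_filter_add_card_filter_not (s := C) (r v)
      rw [card_insert_of_notMem hv, pow_succ, ← mul_assoc, mul_two] at hC
      by_cases h : k * 2 ^ #T ≤ #(C.filter (r v))
      · exact ⟨_, filter_subset _ _, h, .inl fun u hu => (mem_filter.mp hu).2⟩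
      · exact ⟨_, filter_subset _ _, by omega, .inr fun u hu => (mem_filter.mp hu).2⟩
    obtain ⟨C', hC'D, hC', hT⟩ := ih hD
    refine ⟨C', hC'D.trans hDC, hC', fun w hw => ?_⟩
    rcases mem_insert.mp hw with rfl | hw
    · exact hvD.imp (fun h u hu => h u (hC'D hu)) (fun h u hu => h u (hC'D hu))
    · exact hT w hw

lemma exists_card_eq_subset_forall_or_forall_not (p : α → Prop) {k : ℕ} {T : Finset α}
    (hT : 2 * k - 1 ≤ #T) :
    ∃ B ⊆ T, #B = k ∧ ((∀ b ∈ B, p b) ∨ (∀ b ∈ B, ¬ p b)) := by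
  classical
  have hsplit := card_filter_add_card_filter_not (s := T) p
  by_cases h : k ≤ #(T.filter p)
  · obtain ⟨B, hB, hBk⟩ := exists_subset_card_eq h
    exact ⟨B, hB.trans (filter_subset _ _), hBk, .inl fun b hb => (mem_filter.mp (hB hb)).2⟩
  · obtain ⟨B, hB, hBk⟩ :=
      exists_subset_card_eq (s := T.filter (¬ p ·)) (n := k) (by omega)
    exact ⟨B, hB.trans (filter_subset _ _), hBk, .inr fun b hb => (mem_filter.mp (hB hb)).2⟩

lemma exists_bipartite_homogeneous (r : α → β → Prop) {k : ℕ} {T : Finset α}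
    {C : Finset β} (hT : 2 * k - 1 ≤ #T) (hC : k * 2 ^ #T ≤ #C) :
    ∃ B ⊆ T, ∃ A ⊆ C, #B = k ∧ #A = k ∧
      ((∀ b ∈ B, ∀ a ∈ A, r b a) ∨ (∀ b ∈ B, ∀ a ∈ A, ¬ r b a)) := by
  obtain ⟨C', hC'C, hC', hhom⟩ := exists_homogeneous_subset_of_mul_two_pow_card_le r k T hC
  obtain ⟨A, hAC', hA⟩ := exists_subset_card_eq hC'
  obtain ⟨B, hBT, hB, hBp⟩ :=
    exists_card_eq_subset_forall_or_forall_not (fun b => ∀ a ∈ C', r b a) hT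
  refine ⟨B, hBT, A, hAC'.trans hC'C, hB, hA,
    hBp.imp (fun h b hb a ha => h b hb a (hAC' ha)) fun h b hb a ha => ?_⟩
  exact (hhom b (hBT hb)).resolve_left (h b hb) a (hAC' ha)

end Homogeneous

lemma Sgraph_adj {k : ℕ} {a b : Fin k ⊕ Fin k} :
    (Sgraph k).Adj a b ↔ a ≠ b ∧ a.isLeft ∧ b.isLeft := by
  simp only [Sgraph, fromRel_adj]
  tauto

section Graph

variable {V : Type} {G : SimpleGraph V}

lemma card_inter_le_one_of_isClique_of_isIndepSet [DecidableEq V] {s t : Finset V}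
    (hs : G.IsClique (s : Set V)) (ht : G.IsIndepSet (t : Set V)) : #(s ∩ t) ≤ 1 :=
  card_le_one.mpr fun a ha b hb => by
    by_contra hab
    rw [mem_inter] at ha hb
    exact ht ha.2 hb.2 hab (hs ha.1 hb.1 hab)

lemma nonempty_Sgraph_embedding {k : ℕ} {A B : Finset V} (hA : #A = k) (hB : #B = k)
    (hAB : Disjoint A B) (hAc : G.IsClique (A : Set V)) (hBi : G.IsIndepSet (B : Set V))
    (hcross : ∀ a ∈ A, ∀ b ∈ B, ¬ G.Adj a b) : Nonempty (Sgraph k ↪g G) := by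
  let eA := (A.equivFinOfCardEq hA).symm
  let eB := (B.equivFinOfCardEq hB).symm
  let f : Fin k ⊕ Fin k → V := Sum.elim (fun i => eA i) (fun i => eB i)
  have hf : f.Injective := (Subtype.val_injective.comp eA.injective).sumElim
    (Subtype.val_injective.comp eB.injective)
    fun i j => disjoint_iff_ne.mp hAB _ (eA i).2 _ (eB j).2
  refine ⟨⟨⟨f, hf⟩, fun {a b} => ?_⟩⟩
  rw [Sgraph_adj]
  rcases a with i | i <;> rcases b with j | j
  · refine ⟨fun h => ⟨fun hij => h.ne (congrArg f hij), rfl, rfl⟩, fun ⟨hij, _⟩ => ?_⟩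
    exact hAc (eA i).2 (eA j).2 fun h => hij (hf h)
  · simpa [f] using hcross _ (eA i).2 _ (eB j).2
  · simpa [f, G.adj_comm] using hcross _ (eA j).2 _ (eB i).2
  · simpa [f] using fun h : G.Adj (eB i) (eB j) => hBi (eB i).2 (eB j).2 h.ne h

lemma nonempty_compl_Sgraph_embedding {k : ℕ} {A B : Finset V} (hA : #A = k) (hB : #B = k)
    (hAB : Disjoint A B) (hAc : G.IsClique (A : Set V)) (hBi : G.IsIndepSet (B : Set V))
    (hcross : ∀ a ∈ A, ∀ b ∈ B, G.Adj a b) : Nonempty ((Sgraph k)ᶜ ↪g G) := by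
  obtain ⟨e⟩ := nonempty_Sgraph_embedding (G := Gᶜ) hB hA hAB.symm
    ((isClique_compl G).mpr hBi) ((isIndepSet_compl G).mpr hAc)
    fun b hb a ha h => ((compl_adj G b a).mp h).2 (hcross a ha b hb).symm
  exact ⟨compl_compl G ▸ Embedding.complEquiv e⟩

end Graph

theorem clique_indep_implies_S_or_coS_general (k : ℕ) :
    ∃ N : ℕ, ∀ (V : Type) (G : SimpleGraph V),
      (∃ s : Finset V, G.IsNClique N s) →
      (∃ s : Finset V, s.card = N ∧ G.IsIndepSet' (↑s : Set V)) →
      Nonempty (Sgraph k ↪g G) ∨ Nonempty ((Sgraph k)ᶜ ↪g G) := by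
  classical
  refine ⟨k * 2 ^ (2 * k - 1) + 2 * k, fun V G ⟨s, hs⟩ ⟨t, ht, htind⟩ => ?_⟩
  have hti : G.IsIndepSet (t : Set V) := htind
  have hst := card_inter_le_one_of_isClique_of_isIndepSet hs.isClique hti
  obtain ⟨T, hTts, hT⟩ := exists_subset_card_eq (s := t \ s) (n := 2 * k - 1) <| by
    have := card_sdiff_add_card_inter t s
    rw [inter_comm] at this
    omega
  obtain ⟨B, hBT, A, hAs, hB, hA, hcross⟩ :=
    exists_bipartite_homogeneous G.Adj (C := s) hT.ge (by rw [hT, hs.card_eq]; omega)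
  have hBts : B ⊆ t \ s := hBT.trans hTts
  have hAB : Disjoint A B := disjoint_sdiff.mono hAs hBts
  have hAc : G.IsClique (A : Set V) := hs.isClique.subset (by exact_mod_cast hAs)
  have hBi : G.IsIndepSet (B : Set V) :=
    hti.mono (by exact_mod_cast hBts.trans sdiff_subset)
  rcases hcross with hall | hnone
  · exact .inr (nonempty_compl_Sgraph_embedding hA hB hAB hAc hBi fun a ha b hb =>
      (hall b hb a ha).symm)
  · exact .inl (nonempty_Sgraph_embedding hA hB hAB hAc hBi fun a ha b hb h =>
      hnone b hb a ha h.symm)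

/-- For every positive `k` there is `N` such that every graph containing a clique of size `N`
and an independent set of size `N` contains `S_k` or its complement as an induced subgraph. -/
theorem clique_indep_implies_S_or_coS (k : ℕ) (hk : 0 < k) :
    ∃ N : ℕ, ∀ (V : Type) (G : SimpleGraph V),
      (∃ s : Finset V, G.IsNClique N s) →
      (∃ s : Finset V, s.card = N ∧ G.IsIndepSet' (↑s : Set V)) →
      Nonempty (Sgraph k ↪g G) ∨ Nonempty ((Sgraph k)ᶜ ↪g G) :=
  clique_indep_implies_S_or_coS_general k
end

section
/- For every positive integer k, there exists N = N(k) such that every graph G containing a vertex v with at least N neighbours and at least N non-neighbours contains one of the following as an induced subgraph: S_k, the complement of S_k, Q_k, the complement of Q_k, the complete bipartite graph K_{k,k}, or the complement of K_{k,k}. Here S_k is a clique of size k plus k isolated vertices, and Q_k is the disjoint union of a star K_{1,k} and k isolated vertices. -/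
/-- `Qgraph k` : the disjoint union of a star `K_{1,k}` (centre `inl (inl ())`, leaves
`inl (inr i)`) and `k` isolated vertices (the right summand). -/
def Qgraph (k : ℕ) : SimpleGraph ((Unit ⊕ Fin k) ⊕ Fin k) :=
  SimpleGraph.fromRel
    (fun u v => u = Sum.inl (Sum.inl ()) ∧ ∃ i : Fin k, v = Sum.inl (Sum.inr i))

open Finset

namespace SimpleGraph

variable {α β V : Type*}

section

variable (G : SimpleGraph V)

theorem exists_isNClique_or_isNClique_compl (a b : ℕ) (s : Finset V)
    (hs : (a + b).choose a ≤ #s) : ∃ t ⊆ s, G.IsNClique a t ∨ Gᶜ.IsNClique b t := by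
  classical
  obtain ⟨n, hn⟩ : ∃ n, a + b = n := ⟨_, rfl⟩
  induction n generalizing a b s with
  | zero => exact ⟨∅, empty_subset s, .inl (by simp; omega)⟩
  | succ n ih =>
    obtain _ | a := a
    · exact ⟨∅, empty_subset s, .inl (by simp)⟩
    obtain _ | b := b
    · exact ⟨∅, empty_subset s, .inr (by simp)⟩
    obtain ⟨x, hx⟩ : s.Nonempty := card_pos.1 (lt_of_lt_of_le (Nat.choose_pos (by omega)) hs)
    set N := {y ∈ s.erase x | G.Adj x y}
    set M := {y ∈ s.erase x | Gᶜ.Adj x y}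
    have hNM : #N + #M + 1 = #s := by
      have : M = {y ∈ s.erase x | ¬ G.Adj x y} :=
        filter_congr fun y hy => by simp [compl_adj, (ne_of_mem_erase hy).symm]
      rw [this, card_filter_add_card_filter_not, card_erase_add_one hx]
    have hNs : N ⊆ s := (filter_subset _ _).trans (erase_subset _ _)
    have hMs : M ⊆ s := (filter_subset _ _).trans (erase_subset _ _)
    have hpascal := Nat.choose_succ_succ' (a + b + 1) a
    rw [show a + 1 + (b + 1) = a + b + 1 + 1 by omega] at hs
    by_cases hN : (a + b + 1).choose a ≤ #N
    · obtain ⟨t, htN, ht | ht⟩ := ih a (b + 1) N hN (by omega)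
      · exact ⟨insert x t, insert_subset hx (htN.trans hNs),
          .inl (ht.insert fun y hy => (mem_filter.1 (htN hy)).2)⟩
      · exact ⟨t, htN.trans hNs, .inr ht⟩
    · have hM : (a + 1 + b).choose (a + 1) ≤ #M := by
        rw [show a + 1 + b = a + b + 1 by omega]; omega
      obtain ⟨t, htM, ht | ht⟩ := ih (a + 1) b M hM (by omega)
      · exact ⟨t, htM.trans hMs, .inl ht⟩
      · exact ⟨insert x t, insert_subset hx (htM.trans hMs),
          .inr (ht.insert fun y hy => (mem_filter.1 (htM hy)).2)⟩

theorem exists_card_eq_forall_adj_or_forall_compl_adj {L R : Finset V} (hLR : Disjoint L R)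
    {k : ℕ} (hL : 2 * k ≤ #L) (hR : k * 4 ^ k ≤ #R) :
    ∃ X ⊆ L, ∃ Y ⊆ R, #X = k ∧ #Y = k ∧
      ((∀ x ∈ X, ∀ y ∈ Y, G.Adj x y) ∨ ∀ x ∈ X, ∀ y ∈ Y, Gᶜ.Adj x y) := by
  classical
  obtain ⟨L₀, hL₀L, hL₀⟩ := exists_subset_card_eq hL
  -- Pigeonhole on the trace `{x ∈ L₀ | G.Adj x y}` of the neighbourhood of `y ∈ R`.
  obtain ⟨T, hT, hTR⟩ := exists_le_card_fiber_of_mul_le_card_of_maps_to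
    (s := R) (n := k) (f := fun y => {x ∈ L₀ | G.Adj x y})
    (fun y _ => mem_powerset.2 (filter_subset _ _))
    (powerset_nonempty L₀) (by rwa [card_powerset, hL₀, pow_mul, mul_comm])
  obtain ⟨Y, hYT, hY⟩ := exists_subset_card_eq hTR
  have hYR : Y ⊆ R := hYT.trans (filter_subset _ _)
  have hadj : ∀ y ∈ Y, ∀ x ∈ L₀, G.Adj x y ↔ x ∈ T := fun y hy x hx => by
    rw [← (mem_filter.1 (hYT hy)).2, mem_filter]
    exact ⟨fun h => ⟨hx, h⟩, And.right⟩
  have hsplit : #T + #(L₀ \ T) = 2 * k := by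
    rw [add_comm, card_sdiff_add_card_eq_card (mem_powerset.1 hT), hL₀]
  by_cases hTk : k ≤ #T
  · obtain ⟨X, hXT, hX⟩ := exists_subset_card_eq hTk
    refine ⟨X, (hXT.trans (mem_powerset.1 hT)).trans hL₀L, Y, hYR, hX, hY, .inl ?_⟩
    exact fun x hx y hy => (hadj y hy x (mem_powerset.1 hT (hXT hx))).2 (hXT hx)
  · obtain ⟨X, hXT, hX⟩ := exists_subset_card_eq (show k ≤ #(L₀ \ T) by omega)
    have hXL : X ⊆ L := (hXT.trans sdiff_subset).trans hL₀L
    refine ⟨X, hXL, Y, hYR, hX, hY, .inr fun x hx y hy => ?_⟩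
    have hx' := mem_sdiff.1 (hXT hx)
    exact ⟨fun h => Finset.disjoint_left.1 hLR (hXL hx) (h ▸ hYR hy),
      fun h => hx'.2 ((hadj y hy x hx'.1).1 h)⟩

end

theorem sgraph_eq_top_sum_bot (k : ℕ) : Sgraph k = ⊤ ⊕g ⊥ := by
  ext (i | i) (j | j) <;> simp [Sgraph]

theorem completeBipartiteGraph_eq_compl_top_sum_top :
    completeBipartiteGraph α β = (⊤ ⊕g ⊤)ᶜ := by
  ext (i | i) (j | j) <;> simp

theorem qgraph_eq_completeBipartiteGraph_sum_bot (k : ℕ) :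
    Qgraph k = completeBipartiteGraph Unit (Fin k) ⊕g ⊥ := by
  ext ((⟨⟩ | i) | i) ((⟨⟩ | j) | j) <;> simp [Qgraph]

variable {H H₁ : SimpleGraph α} {G : SimpleGraph V}

@[simps!]
def Embedding.sumElim {H₂ : SimpleGraph β} (f : H₁ ↪g G) (g : H₂ ↪g G)
    (h : ∀ a b, Gᶜ.Adj (f a) (g b)) : H₁ ⊕g H₂ ↪g G where
  toFun := Sum.elim f g
  inj' := f.injective.sumElim g.injective fun a b => (h a b).ne
  map_rel_iff' := by
    rintro (a | a) (b | b)
    · simp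
    · simpa using (compl_adj G _ _).1 (h a b) |>.2
    · simpa using fun hab => ((compl_adj G _ _).1 (h b a)).2 hab.symm
    · simp

@[simps]
def Embedding.complOfCompl (f : H ↪g Gᶜ) : Hᶜ ↪g G where
  toFun := f
  inj' := f.injective
  map_rel_iff' {a b} := by
    obtain rfl | hab := eq_or_ne a b
    · simp
    · simp [hab, f.injective.ne hab, ← f.map_adj_iff]

theorem IsIndContained.compl_of_compl (h : H ⊴ Gᶜ) : Hᶜ ⊴ G :=
  ⟨h.some.complOfCompl⟩

theorem IsClique.exists_top_embedding [Fintype α] {s : Finset V} (hs : G.IsClique s)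
    (h : Fintype.card α = #s) : ∃ f : (⊤ : SimpleGraph α) ↪g G, ∀ a, f a ∈ s := by
  let e : α ≃ s := Fintype.equivOfCardEq (by rw [h, Fintype.card_coe])
  refine ⟨⟨e.toEmbedding.trans (Function.Embedding.subtype _), ?_⟩, fun a => (e a).2⟩
  intro a b
  simp only [Function.Embedding.trans_apply, Equiv.coe_toEmbedding,
    Function.Embedding.coe_subtype, top_adj]
  refine ⟨fun hab hab' => G.irrefl (hab' ▸ hab), fun hab => hs (e a).2 (e b).2 ?_⟩
  exact fun h => hab (e.injective (Subtype.ext h))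

theorem IsClique.exists_bot_embedding_of_compl [Fintype α] {s : Finset V} (hs : Gᶜ.IsClique s)
    (h : Fintype.card α = #s) : ∃ f : (⊥ : SimpleGraph α) ↪g G, ∀ a, f a ∈ s := by
  obtain ⟨f, hf⟩ := hs.exists_top_embedding h
  refine ⟨⟨f.toEmbedding, fun {a b} => ?_⟩, hf⟩
  simp only [RelEmbedding.coe_toEmbedding, bot_adj, iff_false]
  intro hab
  exact ((compl_adj G _ _).1 (f.map_adj_iff.2 fun h => hab.ne (congrArg f h))).2 hab

def HasUnavoidableInducedSubgraph (k : ℕ) (G : SimpleGraph V) : Prop :=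
  Sgraph k ⊴ G ∨ (Sgraph k)ᶜ ⊴ G ∨ Qgraph k ⊴ G ∨ (Qgraph k)ᶜ ⊴ G ∨
    completeBipartiteGraph (Fin k) (Fin k) ⊴ G ∨
    (completeBipartiteGraph (Fin k) (Fin k))ᶜ ⊴ G

theorem HasUnavoidableInducedSubgraph.of_compl {k : ℕ}
    (h : HasUnavoidableInducedSubgraph k Gᶜ) : HasUnavoidableInducedSubgraph k G := by
  have of_compl_compl {W : Type} {H : SimpleGraph W} (hH : Hᶜ ⊴ Gᶜ) : H ⊴ G :=
    compl_compl H ▸ hH.compl_of_compl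
  rcases h with h | h | h | h | h | h
  · exact .inr <| .inl h.compl_of_compl
  · exact .inl <| of_compl_compl h
  · exact .inr <| .inr <| .inr <| .inl h.compl_of_compl
  · exact .inr <| .inr <| .inl <| of_compl_compl h
  · exact .inr <| .inr <| .inr <| .inr <| .inr h.compl_of_compl
  · exact .inr <| .inr <| .inr <| .inr <| .inl <| of_compl_compl h

theorem hasUnavoidableInducedSubgraph_of_homogeneous {k : ℕ} {v : V} {X Y : Finset V}
    (hX : #X = k) (hY : #Y = k) (hvX : ∀ x ∈ X, G.Adj v x) (hvY : ∀ y ∈ Y, Gᶜ.Adj v y)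
    (hXh : G.IsClique X ∨ Gᶜ.IsClique X) (hYh : G.IsClique Y ∨ Gᶜ.IsClique Y)
    (hXY : (∀ x ∈ X, ∀ y ∈ Y, G.Adj x y) ∨ ∀ x ∈ X, ∀ y ∈ Y, Gᶜ.Adj x y) :
    HasUnavoidableInducedSubgraph k G := by
  wlog hXY' : ∀ x ∈ X, ∀ y ∈ Y, Gᶜ.Adj x y generalizing G X Y
  · have hYX : ∀ y ∈ Y, ∀ x ∈ X, Gᶜᶜ.Adj y x := fun y hy x hx => by
      simpa using ((hXY.resolve_right hXY') x hx y hy).symm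
    exact .of_compl <| this hY hX hvY (by simpa using hvX) (by simpa [or_comm] using hYh)
      (by simpa [or_comm] using hXh) (.inr hYX) hYX
  have hXk : Fintype.card (Fin k) = #X := by simp [hX]
  have hYk : Fintype.card (Fin k) = #Y := by simp [hY]
  rcases hXh with hXc | hXi <;> rcases hYh with hYc | hYi
  · obtain ⟨f, hf⟩ := hXc.exists_top_embedding hXk
    obtain ⟨g, hg⟩ := hYc.exists_top_embedding hYk
    refine .inr <| .inr <| .inr <| .inr <| .inr ?_
    rw [completeBipartiteGraph_eq_compl_top_sum_top, compl_compl]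
    exact ⟨f.sumElim g fun a b => hXY' _ (hf a) _ (hg b)⟩
  · obtain ⟨f, hf⟩ := hXc.exists_top_embedding hXk
    obtain ⟨g, hg⟩ := hYi.exists_bot_embedding_of_compl hYk
    refine .inl ?_
    rw [sgraph_eq_top_sum_bot]
    exact ⟨f.sumElim g fun a b => hXY' _ (hf a) _ (hg b)⟩
  · obtain ⟨f, hf⟩ := hYc.exists_top_embedding hYk
    obtain ⟨g, hg⟩ := hXi.exists_bot_embedding_of_compl hXk
    refine .inl ?_
    rw [sgraph_eq_top_sum_bot]
    exact ⟨f.sumElim g fun a b => (hXY' _ (hg b) _ (hf a)).symm⟩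
  · have hv : Gᶜ.IsClique (({v} : Finset V) : Set V) := by simp
    obtain ⟨c, hc⟩ := hv.exists_top_embedding (α := Unit) (by simp)
    obtain ⟨f, hf⟩ := hXi.exists_top_embedding hXk
    obtain ⟨g, hg⟩ := hYi.exists_bot_embedding_of_compl hYk
    have hc : c () = v := mem_singleton.1 (hc ())
    let star := (c.sumElim f fun _ i => by simpa [hc] using hvX _ (hf i)).complOfCompl
    refine .inr <| .inr <| .inl ?_
    rw [qgraph_eq_completeBipartiteGraph_sum_bot, completeBipartiteGraph_eq_compl_top_sum_top]
    refine ⟨star.sumElim g ?_⟩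
    rintro (⟨⟩ | i) j
    · simpa [star, hc] using hvY _ (hg j)
    · simpa [star] using hXY' _ (hf i) _ (hg j)

end SimpleGraph

theorem complex_degree_unavoidable_general (k : ℕ) :
    ∃ N : ℕ, ∀ (V : Type) (G : SimpleGraph V),
      (∃ (v : V) (Nb Nnb : Finset V),
        N ≤ Nb.card ∧ N ≤ Nnb.card ∧
        (∀ u ∈ Nb, G.Adj v u) ∧ (∀ u ∈ Nnb, u ≠ v ∧ ¬ G.Adj v u)) →
      Nonempty (Sgraph k ↪g G) ∨ Nonempty ((Sgraph k)ᶜ ↪g G) ∨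
      Nonempty (Qgraph k ↪g G) ∨ Nonempty ((Qgraph k)ᶜ ↪g G) ∨
      Nonempty (completeBipartiteGraph (Fin k) (Fin k) ↪g G) ∨
      Nonempty ((completeBipartiteGraph (Fin k) (Fin k))ᶜ ↪g G) := by
  refine ⟨(k * 4 ^ k + k * 4 ^ k).choose (k * 4 ^ k), ?_⟩
  rintro V G ⟨v, A, B, hA, hB, hvA, hvB⟩
  have hAB : Disjoint A B := disjoint_left.2 fun x hxA hxB => (hvB x hxB).2 (hvA x hxA)
  obtain ⟨P, hPA, hP⟩ := G.exists_isNClique_or_isNClique_compl _ _ A hA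
  obtain ⟨Q, hQB, hQ⟩ := G.exists_isNClique_or_isNClique_compl _ _ B hB
  have hPm : #P = k * 4 ^ k := hP.elim (·.card_eq) (·.card_eq)
  have hQm : #Q = k * 4 ^ k := hQ.elim (·.card_eq) (·.card_eq)
  have h2k : 2 * k ≤ k * 4 ^ k := by
    rcases k.eq_zero_or_pos with rfl | hk
    · simp
    · nlinarith [Nat.one_lt_pow hk.ne' (show 1 < 4 by norm_num)]
  obtain ⟨X, hXP, Y, hYQ, hX, hY, hXY⟩ :=
    G.exists_card_eq_forall_adj_or_forall_compl_adj (hAB.mono hPA hQB) (hPm ▸ h2k) hQm.ge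
  exact SimpleGraph.hasUnavoidableInducedSubgraph_of_homogeneous hX hY
    (fun x hx => hvA x (hPA (hXP hx)))
    (fun y hy => (G.compl_adj v y).2 ⟨(hvB y (hQB (hYQ hy))).1.symm, (hvB y (hQB (hYQ hy))).2⟩)
    (hP.imp (·.isClique.subset hXP) (·.isClique.subset hXP))
    (hQ.imp (·.isClique.subset hYQ) (·.isClique.subset hYQ)) hXY

/-- For every positive `k` there is `N` such that every graph with a vertex having at least `N`
neighbours and at least `N` non-neighbours contains one of `S_k`, `co-S_k`, `Q_k`, `co-Q_k`,
`K_{k,k}`, `co-K_{k,k}` as an induced subgraph. -/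
theorem complex_degree_unavoidable (k : ℕ) (hk : 0 < k) :
    ∃ N : ℕ, ∀ (V : Type) (G : SimpleGraph V),
      (∃ (v : V) (Nb Nnb : Finset V),
        N ≤ Nb.card ∧ N ≤ Nnb.card ∧
        (∀ u ∈ Nb, G.Adj v u) ∧ (∀ u ∈ Nnb, u ≠ v ∧ ¬ G.Adj v u)) →
      Nonempty (Sgraph k ↪g G) ∨ Nonempty ((Sgraph k)ᶜ ↪g G) ∨
      Nonempty (Qgraph k ↪g G) ∨ Nonempty ((Qgraph k)ᶜ ↪g G) ∨
      Nonempty (completeBipartiteGraph (Fin k) (Fin k) ↪g G) ∨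
      Nonempty ((completeBipartiteGraph (Fin k) (Fin k))ᶜ ↪g G) :=
  complex_degree_unavoidable_general k
end

section
/- For any positive integers s and t, there exists q = q(s,t) such that every bipartite graph G containing a matching of size q contains either an induced matching of size s (i.e., s edges pairwise at distance at least 2) or an induced complete bipartite subgraph K_{t,t}. -/
/-!
Colour each pair `i < j` of edges `aᵢbᵢ, aⱼbⱼ` of the matching by which of the two cross edges
`aᵢbⱼ`, `aⱼbᵢ` are present. A greedy Ramsey argument for ordered pairs yields a long subsequence of
the matching on which this colour is constant. If neither cross edge ever occurs, the subsequence is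
an induced matching; otherwise it contains a half graph, whose first half on one side is completely
joined to the second half on the other side, giving an induced `K_{t,t}`.
-/
open Finset

section Ramsey

variable {α β : Type*} [Fintype α]

theorem Finset.exists_fin_embedding_color_eq_of_lt (χ : β → β → α) (n : ℕ) {S : Finset β}
    (hS : (Fintype.card α + 1) ^ n ≤ #S) :
    ∃ (f : Fin n ↪ β) (c : Fin n → α), (∀ i, f i ∈ S) ∧ ∀ i j, i < j → χ (f i) (f j) = c i := by
  classical
  induction n generalizing S with
  | zero => exact ⟨⟨Fin.elim0, fun i => i.elim0⟩, Fin.elim0, fun i => i.elim0, fun i => i.elim0⟩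
  | succ n ih =>
    obtain ⟨x, hx⟩ : S.Nonempty := card_pos.mp (lt_of_lt_of_le (by positivity) hS)
    have : Nonempty α := ⟨χ x x⟩
    have hT : Fintype.card α * (Fintype.card α + 1) ^ n ≤ #(S.erase x) := by
      have : 0 < (Fintype.card α + 1) ^ n := by positivity
      rw [card_erase_of_mem hx]
      rw [pow_succ', add_mul, one_mul] at hS
      omega
    -- pigeonhole on the colours of the pairs `(x, y)`, then recurse on the largest colour class
    obtain ⟨a, -, ha⟩ := exists_le_card_fiber_of_mul_le_card_of_maps_to
      (s := S.erase x) (t := univ) (f := χ x) (fun y _ => mem_univ (χ x y)) univ_nonempty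
      (by rwa [card_univ])
    obtain ⟨f, c, hfT, hfc⟩ := ih ha
    have hfS : ∀ i, f i ∈ S.erase x := fun i => (mem_filter.mp (hfT i)).1
    refine ⟨⟨Fin.cons x f, Fin.cons_injective_iff.mpr ⟨?_, f.injective⟩⟩, Fin.cons a c, ?_, ?_⟩
    · rintro ⟨i, rfl⟩
      exact notMem_erase _ _ (hfS i)
    · exact Fin.cases hx fun i => mem_of_mem_erase (hfS i)
    · intro i j hij
      induction j using Fin.cases with
      | zero => exact absurd hij (Fin.not_lt_zero i)
      | succ j =>
        induction i using Fin.cases with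
        | zero => exact (mem_filter.mp (hfT j)).2
        | succ i => exact hfc i j (Fin.succ_lt_succ_iff.mp hij)

theorem Fintype.exists_fin_embedding_monochromatic [Fintype β] (χ : β → β → α) (n : ℕ)
    (hβ : (Fintype.card α + 1) ^ (Fintype.card α * n) ≤ Fintype.card β) :
    ∃ (f : Fin n ↪ β) (a : α), ∀ i j, i < j → χ (f i) (f j) = a := by
  classical
  obtain ⟨f, c, -, hfc⟩ := Finset.exists_fin_embedding_color_eq_of_lt χ _ (S := univ) hβ
  obtain ⟨b⟩ : Nonempty β := Fintype.card_pos_iff.mp (lt_of_lt_of_le (by positivity) hβ)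
  have : Nonempty α := ⟨χ b b⟩
  obtain ⟨a, ha⟩ := Fintype.exists_le_card_fiber_of_mul_le_card c (n := n) (by simp)
  let e := (univ.filter (c · = a)).orderEmbOfCardLe ha
  refine ⟨e.toEmbedding.trans f, a, fun i j hij => ?_⟩
  have hc : c (e i) = a := (mem_filter.mp ((univ.filter (c · = a)).orderEmbOfCardLe_mem ha i)).2
  exact (hfc _ _ (e.strictMono hij)).trans hc

end Ramsey

section BipartiteGraph

variable {A B : Type*} (E : A → B → Prop)

def HasMatching (q : ℕ) : Prop :=
  ∃ (f : Fin q ↪ A) (g : Fin q ↪ B), ∀ i, E (f i) (g i)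

def HasInducedMatching (s : ℕ) : Prop :=
  ∃ (f : Fin s ↪ A) (g : Fin s ↪ B), ∀ i j, E (f i) (g j) ↔ i = j

def HasCompleteBipartite (t : ℕ) : Prop :=
  ∃ (f : Fin t ↪ A) (g : Fin t ↪ B), ∀ i j, E (f i) (g j)

variable {E}

theorem HasInducedMatching.mono {s n : ℕ} (h : HasInducedMatching E n) (hsn : s ≤ n) :
    HasInducedMatching E s := by
  obtain ⟨f, g, hfg⟩ := h
  exact ⟨(Fin.castLEEmb hsn).trans f, (Fin.castLEEmb hsn).trans g,
    fun i j => (hfg _ _).trans (Fin.castLEEmb hsn).injective.eq_iff⟩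

theorem hasInducedMatching_of_forall_ne {n : ℕ} (x : Fin n ↪ A) (y : Fin n ↪ B)
    (hxy : ∀ i, E (x i) (y i)) (hne : ∀ i j, i ≠ j → ¬E (x i) (y j)) :
    HasInducedMatching E n :=
  ⟨x, y, fun i j => ⟨not_imp_not.mp (hne i j), fun h => h ▸ hxy i⟩⟩

theorem hasCompleteBipartite_of_forall_lt {n t : ℕ} (x : Fin n ↪ A) (y : Fin n ↪ B)
    (hxy : ∀ i j, i < j → E (x i) (y j)) (htn : t + t ≤ n) : HasCompleteBipartite E t :=
  ⟨(Fin.castAddEmb t).trans ((Fin.castLEEmb htn).trans x),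
    (Fin.natAddEmb t).trans ((Fin.castLEEmb htn).trans y),
    fun i j => hxy _ _ (show (i : ℕ) < t + j by omega)⟩

end BipartiteGraph

theorem HasMatching.hasInducedMatching_or_hasCompleteBipartite {A B : Type*} {E : A → B → Prop}
    {s t : ℕ} (hE : HasMatching E (5 ^ (4 * max s (t + t)))) :
    HasInducedMatching E s ∨ HasCompleteBipartite E t := by
  classical
  obtain ⟨f, g, hfg⟩ := hE
  -- `5 ^ (4 * _)` is the Ramsey bound for the four colours `Bool × Bool`
  obtain ⟨v, ⟨b₁, b₂⟩, hv⟩ := Fintype.exists_fin_embedding_monochromatic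
    (fun i j => (decide (E (f i) (g j)), decide (E (f j) (g i)))) (max s (t + t)) (by simp)
  simp only [Prod.mk.injEq] at hv
  have hts : t + t ≤ max s (t + t) := le_max_right _ _
  cases b₁
  case true =>
    exact .inr <| hasCompleteBipartite_of_forall_lt (v.trans f) (v.trans g)
      (fun i j hij => by simpa using (hv i j hij).1) hts
  cases b₂
  case true =>
    exact .inr <| hasCompleteBipartite_of_forall_lt (Fin.revPerm.toEmbedding.trans (v.trans f))
      (Fin.revPerm.toEmbedding.trans (v.trans g))
      (fun i j hij => by simpa using (hv _ _ (Fin.rev_lt_rev.mpr hij)).2) hts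
  have hne : ∀ i j, i ≠ j → ¬E (f (v i)) (g (v j)) := by
    intro i j hij
    rcases hij.lt_or_gt with h | h
    · simpa using (hv i j h).1
    · simpa using (hv j i h).2
  exact .inl <| (hasInducedMatching_of_forall_ne (v.trans f) (v.trans g) (fun i => hfg (v i))
    hne).mono (le_max_left _ _)

theorem bipartite_matching_ramsey_general (s t : ℕ) :
    ∃ q : ℕ, ∀ (A B : Type) (E : A → B → Prop),
      (∃ (f : Fin q ↪ A) (g : Fin q ↪ B), ∀ i, E (f i) (g i)) →
      ((∃ (f : Fin s ↪ A) (g : Fin s ↪ B), ∀ i j, E (f i) (g j) ↔ i = j) ∨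
       (∃ (f : Fin t ↪ A) (g : Fin t ↪ B), ∀ i j, E (f i) (g j))) :=
  ⟨_, fun _ _ _ hE => HasMatching.hasInducedMatching_or_hasCompleteBipartite hE⟩

/-- For any positive integers `s` and `t` there is `q` such that every bipartite graph
(given by parts `A`, `B` and edge relation `E`) with a matching of size `q` contains either
an induced matching of size `s` or an induced complete bipartite subgraph `K_{t,t}`. -/
theorem bipartite_matching_ramsey (s t : ℕ) (hs : 0 < s) (ht : 0 < t) :
    ∃ q : ℕ, ∀ (A B : Type) (E : A → B → Prop),
      (∃ (f : Fin q ↪ A) (g : Fin q ↪ B), ∀ i, E (f i) (g i)) →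
      ((∃ (f : Fin s ↪ A) (g : Fin s ↪ B), ∀ i j, E (f i) (g j) ↔ i = j) ∨
       (∃ (f : Fin t ↪ A) (g : Fin t ↪ B), ∀ i j, E (f i) (g j))) :=
  bipartite_matching_ramsey_general s t
end

section
/- For any positive integers s, t, p, there exists Q = Q(s,t,p) such that every graph G containing a matching of size Q contains either an induced matching of size s, or an induced complete bipartite subgraph K_{t,t}, or a clique of size p. -/
/-- `e` lists `m` pairwise vertex-disjoint edges of `G` (a matching of size `m`). -/
def MatchingSeq {V : Type} (G : SimpleGraph V) (m : ℕ) (e : Fin m → V × V) : Prop :=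
  (∀ i, G.Adj (e i).1 (e i).2) ∧
  ∀ i j, i ≠ j →
    (e i).1 ≠ (e j).1 ∧ (e i).1 ≠ (e j).2 ∧ (e i).2 ≠ (e j).1 ∧ (e i).2 ≠ (e j).2

/-- `e` is an induced matching of size `m`: a matching whose `2m` endpoints induce
exactly those `m` edges. -/
def InducedMatchingSeq {V : Type} (G : SimpleGraph V) (m : ℕ) (e : Fin m → V × V) : Prop :=
  MatchingSeq G m e ∧
  ∀ i j, i ≠ j →
    ¬ G.Adj (e i).1 (e j).1 ∧ ¬ G.Adj (e i).1 (e j).2 ∧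
    ¬ G.Adj (e i).2 (e j).1 ∧ ¬ G.Adj (e i).2 (e j).2

/-!
Colour each pair `i < j` of edges of the matching by which endpoints of edge `i` are adjacent
to which endpoints of edge `j`. By Ramsey's theorem for these 16 colours a long submatching
`(aᵢ, bᵢ)` is homogeneous. If the `aᵢ` (or the `bᵢ`) are pairwise adjacent they form a clique.
Otherwise both are independent sets; an adjacency `aᵢ ~ bⱼ` for `i < j` then makes the first `t`
of the `aᵢ` and the last `t` of the `bⱼ` an induced `K_{t,t}` (symmetrically for `bᵢ ~ aⱼ`), and
if there is no adjacency at all the submatching is induced.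

Ramsey's theorem is proved greedily: repeatedly take the least remaining element and keep the
largest class of elements above it by the colour of their pair with it; this gives a sequence whose
pair colours depend only on the smaller index, and pigeonhole on those colours finishes.
-/

open Finset Function

section Ramsey

variable {α β : Type*} [Fintype α] [LinearOrder β]

theorem exists_strictMono_color_eq_of_lt_left (c : β → β → α) (M : ℕ) {S : Finset β}
    (hS : (Fintype.card α + 1) ^ M ≤ #S) :
    ∃ (x : Fin M → β) (d : Fin M → α), StrictMono x ∧ (∀ i, x i ∈ S) ∧
      ∀ i j, i < j → c (x i) (x j) = d i := by
  induction M generalizing S with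
  | zero => exact ⟨finZeroElim, finZeroElim, fun i => i.elim0, fun i => i.elim0, fun i => i.elim0⟩
  | succ M ih =>
    classical
    set k := Fintype.card α
    have hne : S.Nonempty := card_pos.mp (lt_of_lt_of_le (by positivity) hS)
    set m := S.min' hne
    have : Nonempty α := ⟨c m m⟩
    have hrest : k * (k + 1) ^ M ≤ #(S.erase m) := by
      have : (k + 1) ^ (M + 1) = k * (k + 1) ^ M + (k + 1) ^ M := by ring
      have : 0 < (k + 1) ^ M := by positivity
      rw [card_erase_of_mem (S.min'_mem hne)]
      omega
    obtain ⟨a, -, ha⟩ := exists_le_card_fiber_of_mul_le_card_of_maps_to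
      (f := c m) (fun _ _ => mem_univ _) univ_nonempty (by simpa using hrest)
    obtain ⟨x, d, hx, hxS, hxd⟩ := ih ha
    have hxS' : ∀ i, x i ∈ S.erase m ∧ c m (x i) = a := fun i => mem_filter.1 (hxS i)
    have hmx : ∀ i, m < x i := fun i =>
      (S.min'_le _ (mem_of_mem_erase (hxS' i).1)).lt_of_ne (ne_of_mem_erase (hxS' i).1).symm
    refine ⟨Fin.cons m x, Fin.cons a d, Fin.strictMono_cons.2 ⟨hmx, hx⟩,
      Fin.forall_fin_succ.2 ⟨S.min'_mem hne, fun i => mem_of_mem_erase (hxS' i).1⟩, ?_⟩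
    intro i j hij
    cases j using Fin.cases with
    | zero => exact absurd hij (Fin.not_lt_zero i)
    | succ j =>
      cases i using Fin.cases with
      | zero => simpa using (hxS' j).2
      | succ i => simpa using hxd i j (Fin.succ_lt_succ_iff.1 hij)

theorem exists_strictMono_color_eq_of_lt [Fintype β] (c : β → β → α) (N : ℕ)
    (hβ : (Fintype.card α + 1) ^ (Fintype.card α * (N - 1) + 1) ≤ Fintype.card β) :
    ∃ (z : Fin N → β) (a : α), StrictMono z ∧ ∀ i j, i < j → c (z i) (z j) = a := by
  classical
  obtain ⟨x, d, hx, -, hxd⟩ := exists_strictMono_color_eq_of_lt_left c _ (S := univ) hβ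
  obtain ⟨a, ha⟩ := Fintype.exists_lt_card_fiber_of_mul_lt_card d (n := N - 1) (by simp)
  have hN : N ≤ #{i | d i = a} := by omega
  let g := orderEmbOfCardLe _ hN
  refine ⟨x ∘ g, a, hx.comp g.strictMono, fun i j hij => ?_⟩
  rw [comp_apply, comp_apply, hxd _ _ (g.strictMono hij)]
  exact (mem_filter.1 (orderEmbOfCardLe_mem _ hN i)).2

end Ramsey

namespace SimpleGraph

variable {ι κ V : Type*} {G : SimpleGraph V}

theorem adj_of_forall_lt [LinearOrder ι] {f : ι → V} (h : ∀ i j, i < j → G.Adj (f i) (f j))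
    {i j : ι} (hij : i ≠ j) : G.Adj (f i) (f j) :=
  hij.lt_or_gt.elim (h i j) fun hji => (h j i hji).symm

theorem not_adj_of_forall_lt [LinearOrder ι] {f : ι → V}
    (h : ∀ i j, i < j → ¬ G.Adj (f i) (f j)) (i j : ι) : ¬ G.Adj (f i) (f j) := by
  rcases lt_trichotomy i j with hij | rfl | hij
  · exact h i j hij
  · exact G.irrefl
  · exact fun hadj => h j i hij hadj.symm

theorem exists_isNClique_of_adj_of_lt [Fintype ι] [LinearOrder ι] {f : ι → V} {p : ℕ}
    (hf : ∀ i j, i < j → G.Adj (f i) (f j)) (hp : p ≤ Fintype.card ι) :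
    ∃ w, G.IsNClique p w := by
  let e : Copy (⊤ : SimpleGraph ι) G :=
    ⟨⟨f, adj_of_forall_lt hf⟩, fun i j h => by_contra fun hij => (adj_of_forall_lt hf hij).ne h⟩
  have hclique := G.isNClique_map_copy_top e
  obtain ⟨w, hw, rfl⟩ := exists_subset_card_eq (hp.trans hclique.card_eq.ge)
  exact ⟨w, hclique.isClique.subset hw, rfl⟩

theorem nonempty_completeBipartiteGraph_embedding {L : ι → V} {R : κ → V}
    (hL : Injective L) (hR : Injective R) (hLL : ∀ i j, ¬ G.Adj (L i) (L j))
    (hRR : ∀ i j, ¬ G.Adj (R i) (R j)) (hLR : ∀ i j, G.Adj (L i) (R j)) :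
    Nonempty (completeBipartiteGraph ι κ ↪g G) := by
  refine ⟨⟨⟨Sum.elim L R, hL.sumElim hR fun i j => (hLR i j).ne⟩, ?_⟩⟩
  rintro (i | i) (j | j) <;> simp [hLL, hRR, hLR, (hLR _ _).symm]

end SimpleGraph

open SimpleGraph

section MatchingSeq

variable {V : Type} {G : SimpleGraph V} {m n : ℕ} {e : Fin m → V × V}

def edgePattern (G : SimpleGraph V) (x y : V × V) : Prop × Prop × Prop × Prop :=
  (G.Adj x.1 y.1, G.Adj x.1 y.2, G.Adj x.2 y.1, G.Adj x.2 y.2)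

theorem MatchingSeq.comp (he : MatchingSeq G m e) {f : Fin n → Fin m} (hf : Injective f) :
    MatchingSeq G n (e ∘ f) :=
  ⟨fun i => he.1 (f i), fun _ _ hij => he.2 _ _ (hf.ne hij)⟩

theorem MatchingSeq.swap (he : MatchingSeq G m e) : MatchingSeq G m (Prod.swap ∘ e) := by
  refine ⟨fun i => (he.1 i).symm, fun i j hij => ?_⟩
  obtain ⟨h₁₁, h₁₂, h₂₁, h₂₂⟩ := he.2 i j hij
  exact ⟨h₂₂, h₂₁, h₁₂, h₁₁⟩

theorem MatchingSeq.injective_fst (he : MatchingSeq G m e) : Injective fun i => (e i).1 :=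
  fun i j h => by_contra fun hij => (he.2 i j hij).1 h

theorem MatchingSeq.injective_snd (he : MatchingSeq G m e) : Injective fun i => (e i).2 :=
  fun i j h => by_contra fun hij => (he.2 i j hij).2.2.2 h

theorem MatchingSeq.exists_inducedMatchingSeq_of_lt (he : MatchingSeq G m e) {s : ℕ} (hs : s ≤ m)
    (h₁₁ : ∀ i j, i < j → ¬ G.Adj (e i).1 (e j).1) (h₁₂ : ∀ i j, i < j → ¬ G.Adj (e i).1 (e j).2)
    (h₂₁ : ∀ i j, i < j → ¬ G.Adj (e i).2 (e j).1) (h₂₂ : ∀ i j, i < j → ¬ G.Adj (e i).2 (e j).2) :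
    ∃ e' : Fin s → V × V, InducedMatchingSeq G s e' := by
  refine ⟨e ∘ Fin.castLE hs, he.comp (Fin.strictMono_castLE hs).injective, fun i j hij => ?_⟩
  rcases hij.lt_or_gt with h | h
  · exact ⟨h₁₁ _ _ h, h₁₂ _ _ h, h₂₁ _ _ h, h₂₂ _ _ h⟩
  · exact ⟨fun a => h₁₁ _ _ h a.symm, fun a => h₂₁ _ _ h a.symm,
      fun a => h₁₂ _ _ h a.symm, fun a => h₂₂ _ _ h a.symm⟩

theorem MatchingSeq.nonempty_completeBipartiteGraph_embedding_of_lt (he : MatchingSeq G m e)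
    {t : ℕ} (ht : t + t ≤ m) (h₁₁ : ∀ i j, i < j → ¬ G.Adj (e i).1 (e j).1)
    (h₂₂ : ∀ i j, i < j → ¬ G.Adj (e i).2 (e j).2) (h₁₂ : ∀ i j, i < j → G.Adj (e i).1 (e j).2) :
    Nonempty (completeBipartiteGraph (Fin t) (Fin t) ↪g G) := by
  let l : Fin t → Fin m := fun k => Fin.castLE ht (Fin.castAdd t k)
  let r : Fin t → Fin m := fun k => Fin.castLE ht (Fin.natAdd t k)
  have hlr : ∀ k k', l k < r k' := fun k k' => Fin.lt_def.2 (by simp [l, r]; omega)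
  exact nonempty_completeBipartiteGraph_embedding (L := fun k => (e (l k)).1)
    (R := fun k => (e (r k)).2)
    (he.injective_fst.comp ((Fin.strictMono_castLE ht).comp (Fin.strictMono_castAdd t)).injective)
    (he.injective_snd.comp ((Fin.strictMono_castLE ht).comp (Fin.strictMono_natAdd t)).injective)
    (fun _ _ => not_adj_of_forall_lt h₁₁ _ _) (fun _ _ => not_adj_of_forall_lt h₂₂ _ _)
    (fun _ _ => h₁₂ _ _ (hlr _ _))

end MatchingSeq

theorem matching_ramsey_general (s t p : ℕ) :
    ∃ Q : ℕ, ∀ (V : Type) (G : SimpleGraph V),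
      (∃ e : Fin Q → V × V, MatchingSeq G Q e) →
      ((∃ e : Fin s → V × V, InducedMatchingSeq G s e) ∨
       Nonempty (completeBipartiteGraph (Fin t) (Fin t) ↪g G) ∨
       (∃ w : Finset V, G.IsNClique p w)) := by
  let N := s + p + (t + t)
  refine ⟨(16 + 1) ^ (16 * (N - 1) + 1), fun V G ⟨e, he⟩ => ?_⟩
  obtain ⟨z, ⟨P₁₁, P₁₂, P₂₁, P₂₂⟩, hz, hpat⟩ :=
    exists_strictMono_color_eq_of_lt (fun i j => edgePattern G (e i) (e j)) N (by simp)
  have hf := he.comp hz.injective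
  simp only [edgePattern, Prod.mk.injEq] at hpat
  by_cases h₁₁ : P₁₁
  · exact Or.inr <| Or.inr <| exists_isNClique_of_adj_of_lt
      (f := fun i => (e (z i)).1) (fun i j hij => (hpat i j hij).1.mpr h₁₁) (by simp; omega)
  by_cases h₂₂ : P₂₂
  · exact Or.inr <| Or.inr <| exists_isNClique_of_adj_of_lt
      (f := fun i => (e (z i)).2) (fun i j hij => (hpat i j hij).2.2.2.mpr h₂₂) (by simp; omega)
  have n₁₁ := fun i j hij => mt (hpat i j hij).1.mp h₁₁
  have n₂₂ := fun i j hij => mt (hpat i j hij).2.2.2.mp h₂₂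
  by_cases h₁₂ : P₁₂
  · exact Or.inr <| Or.inl <| hf.nonempty_completeBipartiteGraph_embedding_of_lt (by omega)
      n₁₁ n₂₂ fun i j hij => (hpat i j hij).2.1.mpr h₁₂
  by_cases h₂₁ : P₂₁
  · exact Or.inr <| Or.inl <| hf.swap.nonempty_completeBipartiteGraph_embedding_of_lt (by omega)
      n₂₂ n₁₁ fun i j hij => (hpat i j hij).2.2.1.mpr h₂₁
  exact Or.inl <| hf.exists_inducedMatchingSeq_of_lt (by omega) n₁₁
    (fun i j hij => mt (hpat i j hij).2.1.mp h₁₂) (fun i j hij => mt (hpat i j hij).2.2.1.mp h₂₁) n₂₂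

/-- For any positive integers `s`, `t`, `p` there is `Q` such that every graph with a matching
of size `Q` contains an induced matching of size `s`, or an induced `K_{t,t}`, or a clique of
size `p`. -/
theorem matching_ramsey (s t p : ℕ) (hs : 0 < s) (ht : 0 < t) (hp : 0 < p) :
    ∃ Q : ℕ, ∀ (V : Type) (G : SimpleGraph V),
      (∃ e : Fin Q → V × V, MatchingSeq G Q e) →
      ((∃ e : Fin s → V × V, InducedMatchingSeq G s e) ∨
       Nonempty (completeBipartiteGraph (Fin t) (Fin t) ↪g G) ∨
       (∃ w : Finset V, G.IsNClique p w)) :=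
  matching_ramsey_general s t p
end

section
/- For every positive integer m, there exists r = r(m) = 2^{2m} such that every bipartite graph G = (A, B, E) with neighbourhood diversity at least r contains either a skew matching of size m or the complement of a skew matching of size m. -/
/-!
Pairwise non-similar vertices on the same side of a bipartite graph have pairwise distinct
neighbourhoods, and at least half of the `2 ^ (2m)` given vertices lie on one side. Among
`2 ^ (p + q - 1)` distinct sets some point `b` lies in one of them and not in another; one of
the two halves `{S : b ∉ S}`, `{S : b ∈ S}` has `2 ^ (p + q - 2)` members. In the first half
we look recursively for a skew matching of size `p - 1` and put `(S, b)` with `b ∈ S` in front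
of it, in the second for a complemented one of size `q - 1` and put `(S, b)` with `b ∉ S` in
front. The other outcome of the recursion is already good enough.
-/

/-- The bipartite graph on `A ⊕ B` determined by the edge relation `E : A → B → Prop`. -/
def bipGraph (A B : Type) (E : A → B → Prop) : SimpleGraph (A ⊕ B) :=
  SimpleGraph.fromRel (fun u v => ∃ a b, u = Sum.inl a ∧ v = Sum.inr b ∧ E a b)

/-- Two vertices are similar if no third vertex is adjacent to exactly one of them. -/
def VertSimilar {V : Type} (G : SimpleGraph V) (x y : V) : Prop :=
  ∀ z, z ≠ x → z ≠ y → (G.Adj z x ↔ G.Adj z y)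

open Finset Function

section SkewMatching

variable {α β : Type*} {R : α → β → Prop} {m : ℕ}

/-- A complement of a skew matching of `R` is a skew matching of `fun a b => ¬ R a b`. -/
def IsSkewMatching (R : α → β → Prop) (x : Fin m → α) (y : Fin m → β) : Prop :=
  (∀ i, R (x i) (y i)) ∧ ∀ i j, i < j → ¬ R (x j) (y i)

def HasSkewMatching (R : α → β → Prop) (m : ℕ) : Prop :=
  ∃ (x : Fin m ↪ α) (y : Fin m ↪ β), IsSkewMatching R x y

theorem isSkewMatching_not_iff {x : Fin m → α} {y : Fin m → β} :
    IsSkewMatching (fun a b => ¬ R a b) x y ↔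
      (∀ i, ¬ R (x i) (y i)) ∧ ∀ i j, i < j → R (x j) (y i) := by
  simp only [IsSkewMatching, not_not]

namespace IsSkewMatching

variable {x : Fin m → α} {y : Fin m → β}

theorem injective_left (h : IsSkewMatching R x y) : Injective x := by
  intro i j hij
  by_contra hne
  rcases lt_or_gt_of_ne hne with hlt | hlt
  · exact h.2 i j hlt (hij ▸ h.1 i)
  · exact h.2 j i hlt (hij ▸ h.1 j)

theorem injective_right (h : IsSkewMatching R x y) : Injective y := by
  intro i j hij
  by_contra hne
  rcases lt_or_gt_of_ne hne with hlt | hlt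
  · exact h.2 i j hlt (hij ▸ h.1 j)
  · exact h.2 j i hlt (hij ▸ h.1 i)

theorem hasSkewMatching (h : IsSkewMatching R x y) : HasSkewMatching R m :=
  ⟨⟨x, h.injective_left⟩, ⟨y, h.injective_right⟩, h⟩

theorem cons {a : α} {b : β} (h : IsSkewMatching R x y) (hab : R a b)
    (hb : ∀ i, ¬ R (x i) b) : IsSkewMatching R (Fin.cons a x) (Fin.cons b y) := by
  refine ⟨Fin.cases hab h.1, fun i j hij => ?_⟩
  obtain ⟨j, rfl⟩ := Fin.exists_succ_eq.mpr (Fin.ne_zero_of_lt hij)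
  cases i using Fin.cases with
  | zero => simpa using hb j
  | succ i => simpa using h.2 i j (Fin.succ_lt_succ_iff.mp hij)

theorem flip (h : IsSkewMatching R x y) :
    IsSkewMatching (flip R) (y ∘ Fin.rev) (x ∘ Fin.rev) :=
  ⟨fun i => h.1 i.rev, fun _ _ hij => h.2 _ _ (Fin.rev_lt_rev.mpr hij)⟩

end IsSkewMatching

theorem HasSkewMatching.of_flip (h : HasSkewMatching (flip R) m) : HasSkewMatching R m :=
  let ⟨_, _, h⟩ := h
  h.flip.hasSkewMatching

theorem exists_separating_of_injOn {s : Finset α} (hs : Set.InjOn R s) (hcard : 1 < #s) :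
    ∃ b, (∃ a ∈ s, R a b) ∧ ∃ a ∈ s, ¬ R a b := by
  obtain ⟨a, ha, a', ha', hne⟩ := one_lt_card.mp hcard
  obtain ⟨b, hb⟩ : ∃ b, ¬ (R a b ↔ R a' b) := by
    by_contra! h
    exact hne (hs ha ha' (funext fun b => propext (h b)))
  by_cases hab : R a b
  · exact ⟨b, ⟨a, ha, hab⟩, a', ha', by tauto⟩
  · exact ⟨b, ⟨a', ha', by tauto⟩, a, ha, hab⟩

theorem exists_isSkewMatching_or_not_of_injOn (p q : ℕ) (s : Finset α)
    (hs : Set.InjOn R s) (hcard : 2 ^ (p + q) ≤ 2 * #s) :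
    (∃ (x : Fin p → α) (y : Fin p → β), (∀ i, x i ∈ s) ∧ IsSkewMatching R x y) ∨
      ∃ (x : Fin q → α) (y : Fin q → β), (∀ i, x i ∈ s) ∧
        IsSkewMatching (fun a b => ¬ R a b) x y := by
  classical
  match p, q with
  | 0, _ => exact .inl ⟨Fin.elim0, Fin.elim0, (·.elim0), (·.elim0), (·.elim0)⟩
  | _, 0 => exact .inr ⟨Fin.elim0, Fin.elim0, (·.elim0), (·.elim0), (·.elim0)⟩
  | p + 1, q + 1 =>
    have hpow : 2 ^ (p + 1 + (q + 1)) = 4 * 2 ^ (p + q) := by ring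
    obtain ⟨b, ⟨a₁, ha₁, hR₁⟩, a₀, ha₀, hR₀⟩ :=
      exists_separating_of_injOn hs (by have := Nat.one_le_two_pow (n := p + q); omega)
    set s₁ := s.filter (R · b)
    set s₀ := s.filter (¬ R · b)
    have hsplit : #s₁ + #s₀ = #s := card_filter_add_card_filter_not _
    have hsub₁ : ∀ {a}, a ∈ s₁ → a ∈ s := fun ha => (mem_filter.mp ha).1
    have hsub₀ : ∀ {a}, a ∈ s₀ → a ∈ s := fun ha => (mem_filter.mp ha).1
    by_cases h₀ : 2 ^ (p + (q + 1)) ≤ 2 * #s₀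
    · rcases exists_isSkewMatching_or_not_of_injOn p (q + 1) s₀ (hs.mono fun _ => hsub₀) h₀
        with ⟨x, y, hx, hxy⟩ | ⟨x, y, hx, hxy⟩
      · refine .inl ⟨Fin.cons a₁ x, Fin.cons b y,
          Fin.cases ha₁ fun i => hsub₀ (hx i), ?_⟩
        exact hxy.cons hR₁ fun i => (mem_filter.mp (hx i)).2
      · exact .inr ⟨x, y, fun i => hsub₀ (hx i), hxy⟩
    · have h₁ : 2 ^ (p + 1 + q) ≤ 2 * #s₁ := by
        rw [show p + (q + 1) = p + q + 1 by ring, pow_succ] at h₀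
        rw [show p + 1 + q = p + q + 1 by ring, pow_succ]
        omega
      rcases exists_isSkewMatching_or_not_of_injOn (p + 1) q s₁ (hs.mono fun _ => hsub₁) h₁
        with ⟨x, y, hx, hxy⟩ | ⟨x, y, hx, hxy⟩
      · exact .inl ⟨x, y, fun i => hsub₁ (hx i), hxy⟩
      · refine .inr ⟨Fin.cons a₀ x, Fin.cons b y,
          Fin.cases ha₀ fun i => hsub₁ (hx i), ?_⟩
        exact hxy.cons hR₀ fun i => not_not.mpr (mem_filter.mp (hx i)).2
termination_by p + q

theorem hasSkewMatching_or_not_of_injOn {s : Finset α} (hs : Set.InjOn R s)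
    (hcard : 2 ^ (2 * m) ≤ 2 * #s) :
    HasSkewMatching R m ∨ HasSkewMatching (fun a b => ¬ R a b) m := by
  rw [two_mul] at hcard
  rcases exists_isSkewMatching_or_not_of_injOn m m s hs hcard with
    ⟨_, _, -, h⟩ | ⟨_, _, -, h⟩
  exacts [.inl h.hasSkewMatching, .inr h.hasSkewMatching]

end SkewMatching

section BipGraph

variable {A B : Type} {E : A → B → Prop}

@[simp]
theorem bipGraph_adj_inl_inr {a : A} {b : B} :
    (bipGraph A B E).Adj (.inl a) (.inr b) ↔ E a b := by
  simp [bipGraph]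

@[simp]
theorem bipGraph_adj_inr_inl {a : A} {b : B} :
    (bipGraph A B E).Adj (.inr b) (.inl a) ↔ E a b := by
  simp [bipGraph]

@[simp]
theorem bipGraph_not_adj_inl_inl {a a' : A} :
    ¬ (bipGraph A B E).Adj (.inl a) (.inl a') := by
  simp [bipGraph]

@[simp]
theorem bipGraph_not_adj_inr_inr {b b' : B} :
    ¬ (bipGraph A B E).Adj (.inr b) (.inr b') := by
  simp [bipGraph]

theorem vertSimilar_inl_of_eq {a a' : A} (h : E a = E a') :
    VertSimilar (bipGraph A B E) (.inl a) (.inl a') := by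
  rintro (_ | _) - - <;> simp [h]

theorem vertSimilar_inr_of_eq {b b' : B} (h : flip E b = flip E b') :
    VertSimilar (bipGraph A B E) (.inr b) (.inr b') := by
  rintro (a | _) - -
  · simpa [flip] using congrFun h a
  · simp

theorem injOn_toLeft_of_pairwise_not_vertSimilar {S : Finset (A ⊕ B)}
    (hS : (S : Set (A ⊕ B)).Pairwise fun u v => ¬ VertSimilar (bipGraph A B E) u v) :
    Set.InjOn E S.toLeft := by
  intro a ha a' ha' h
  by_contra hne
  exact hS (mem_toLeft.mp ha) (mem_toLeft.mp ha') (by simpa using hne)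
    (vertSimilar_inl_of_eq h)

theorem injOn_toRight_of_pairwise_not_vertSimilar {S : Finset (A ⊕ B)}
    (hS : (S : Set (A ⊕ B)).Pairwise fun u v => ¬ VertSimilar (bipGraph A B E) u v) :
    Set.InjOn (flip E) S.toRight := by
  intro b hb b' hb' h
  by_contra hne
  exact hS (mem_toRight.mp hb) (mem_toRight.mp hb') (by simpa using hne)
    (vertSimilar_inr_of_eq h)

end BipGraph

theorem skew_matching_of_large_diversity_general (m : ℕ) :
    ∀ (A B : Type) (E : A → B → Prop),
      (∃ f : Fin (2 ^ (2 * m)) ↪ (A ⊕ B),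
        ∀ i j, i ≠ j → ¬ VertSimilar (bipGraph A B E) (f i) (f j)) →
      ((∃ (x : Fin m ↪ A) (y : Fin m ↪ B),
          (∀ i, E (x i) (y i)) ∧ ∀ i j : Fin m, i < j → ¬ E (x j) (y i)) ∨
       (∃ (x : Fin m ↪ A) (y : Fin m ↪ B),
          (∀ i, ¬ E (x i) (y i)) ∧ ∀ i j : Fin m, i < j → E (x j) (y i))) := by
  rintro A B E ⟨f, hf⟩
  set S := univ.map f
  have hS : (S : Set (A ⊕ B)).Pairwise fun u v => ¬ VertSimilar (bipGraph A B E) u v := by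
    rintro _ hu _ hv hne
    obtain ⟨i, -, rfl⟩ := mem_map.mp hu
    obtain ⟨j, -, rfl⟩ := mem_map.mp hv
    exact hf i j (f.injective.ne_iff.mp hne)
  have hcard : #S.toLeft + #S.toRight = 2 ^ (2 * m) := by
    rw [card_toLeft_add_card_toRight, card_map, card_univ, Fintype.card_fin]
  have key : HasSkewMatching E m ∨ HasSkewMatching (fun a b => ¬ E a b) m := by
    by_cases hleft : 2 ^ (2 * m) ≤ 2 * #S.toLeft
    · exact hasSkewMatching_or_not_of_injOn (injOn_toLeft_of_pairwise_not_vertSimilar hS) hleft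
    · have hright : 2 ^ (2 * m) ≤ 2 * #S.toRight := by omega
      exact (hasSkewMatching_or_not_of_injOn (injOn_toRight_of_pairwise_not_vertSimilar hS)
        hright).imp HasSkewMatching.of_flip HasSkewMatching.of_flip
  rcases key with ⟨x, y, h⟩ | ⟨x, y, h⟩
  exacts [.inl ⟨x, y, h⟩, .inr ⟨x, y, isSkewMatching_not_iff.mp h⟩]

/-- For every positive integer `m`, with `r = 2^{2m}`, every bipartite graph with
neighbourhood diversity at least `r` (i.e. containing `r` pairwise non-similar vertices)
contains a skew matching of size `m` or the complement of a skew matching of size `m`. -/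
theorem skew_matching_of_large_diversity (m : ℕ) (hm : 0 < m) :
    ∀ (A B : Type) (E : A → B → Prop),
      (∃ f : Fin (2 ^ (2 * m)) ↪ (A ⊕ B),
        ∀ i j, i ≠ j → ¬ VertSimilar (bipGraph A B E) (f i) (f j)) →
      ((∃ (x : Fin m ↪ A) (y : Fin m ↪ B),
          (∀ i, E (x i) (y i)) ∧ ∀ i j : Fin m, i < j → ¬ E (x j) (y i)) ∨
       (∃ (x : Fin m ↪ A) (y : Fin m ↪ B),
          (∀ i, ¬ E (x i) (y i)) ∧ ∀ i j : Fin m, i < j → E (x j) (y i))) :=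
  skew_matching_of_large_diversity_general m
end

section
/- For every graph G, vc(G) ≤ vc[G] ≤ vc(G)·(vc(G)+1) + 1, where vc[G] is the VC-dimension of the family of closed neighbourhoods of vertices of G, and vc(G) is the size of a largest vertex set A such that for every B ⊆ A there is a vertex v outside A with N(v) ∩ A = B. -/
/-- The VC-dimension of the family of closed neighbourhoods of `G`: the largest size of a
vertex set `A` such that every `B ⊆ A` equals `N[v] ∩ A` for some vertex `v`. -/
noncomputable def vcClosed (V : Type) [Fintype V] (G : SimpleGraph V) : ℕ :=
  sSup {n | ∃ A : Finset V, A.card = n ∧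
    ∀ B : Finset V, B ⊆ A → ∃ v : V, ∀ a ∈ A, (a ∈ B ↔ (a = v ∨ G.Adj v a))}

/-- The open variant: the largest size of a vertex set `A` such that every `B ⊆ A` equals
`N(v) ∩ A` for some vertex `v` outside `A`. -/
noncomputable def vcOpen (V : Type) [Fintype V] (G : SimpleGraph V) : ℕ :=
  sSup {n | ∃ A : Finset V, A.card = n ∧
    ∀ B : Finset V, B ⊆ A → ∃ v : V, v ∉ A ∧ ∀ a ∈ A, (a ∈ B ↔ G.Adj v a)}

/-!
If `A` is shattered by closed neighbourhoods and `A' ⊆ A` is small compared with the rest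
`A \ A'`, then `A'` is shattered by open neighbourhoods of outside vertices: to realise
`B ⊆ A'`, pick a trace `X ⊆ A \ A'` that is not `N[b] ∩ (A \ A')` for any `b ∈ B` (there are
more candidates than elements of `B`) and realise `B ∪ X` by some `N[v]`. Then `v ∉ A'`, for
otherwise `v ∈ B` and `X` would be the trace of `v`; so `N(v) ∩ A' = B`. Taking `|A'| = vc(G) + 1`
gives `vc[G] ≤ 2 vc(G) + 1`.
-/

open Finset

namespace SimpleGraph

variable {V : Type} (G : SimpleGraph V)

def IsClosedShattered (A : Finset V) : Prop :=
  ∀ B ⊆ A, ∃ v : V, ∀ a ∈ A, (a ∈ B ↔ (a = v ∨ G.Adj v a))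

def IsOpenShattered (A : Finset V) : Prop :=
  ∀ B ⊆ A, ∃ v : V, v ∉ A ∧ ∀ a ∈ A, (a ∈ B ↔ G.Adj v a)

variable {G}

theorem IsOpenShattered.isClosedShattered {A : Finset V} (hA : G.IsOpenShattered A) :
    G.IsClosedShattered A := by
  intro B hB
  obtain ⟨v, hvA, hv⟩ := hA B hB
  refine ⟨v, fun a ha => ?_⟩
  have hav : a ≠ v := ne_of_mem_of_not_mem ha hvA
  simp only [hv a ha, hav, false_or]

theorem IsClosedShattered.isOpenShattered_of_card_lt [DecidableEq V] {A A' : Finset V}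
    (hA : G.IsClosedShattered A) (hA' : A' ⊆ A) (hcard : #A' < 2 ^ #(A \ A')) :
    G.IsOpenShattered A' := by
  classical
  intro B hB
  let trace : V → Finset V := fun b => {x ∈ A \ A' | x = b ∨ G.Adj b x}
  obtain ⟨X, hX, hXtrace⟩ : ∃ X ⊆ A \ A', X ∉ B.image trace := by
    have hlt : #(B.image trace) < #(A \ A').powerset :=
      calc #(B.image trace) ≤ #B := card_image_le
        _ ≤ #A' := card_le_card hB
        _ < #(A \ A').powerset := by rwa [card_powerset]
    obtain ⟨X, hX, hXtrace⟩ := exists_mem_notMem_of_card_lt_card hlt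
    exact ⟨X, mem_powerset.1 hX, hXtrace⟩
  have hXA' : ∀ x ∈ X, x ∉ A' := fun x hx => (mem_sdiff.1 (hX hx)).2
  obtain ⟨v, hv⟩ := hA (B ∪ X) (union_subset (hB.trans hA') (hX.trans sdiff_subset))
  have hvA' : v ∉ A' := by
    intro hvA'
    have hvB : v ∈ B := by
      rcases mem_union.1 ((hv v (hA' hvA')).2 (Or.inl rfl)) with h | h
      · exact h
      · exact absurd hvA' (hXA' v h)
    refine hXtrace (mem_image.2 ⟨v, hvB, ?_⟩)
    ext x
    simp only [trace, mem_filter, mem_sdiff]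
    constructor
    · rintro ⟨⟨hxA, hxA'⟩, hx⟩
      rcases mem_union.1 ((hv x hxA).2 hx) with h | h
      · exact absurd (hB h) hxA'
      · exact h
    · intro hxX
      exact ⟨mem_sdiff.1 (hX hxX), (hv x (mem_sdiff.1 (hX hxX)).1).1 (mem_union_right B hxX)⟩
  refine ⟨v, hvA', fun a ha => ?_⟩
  have hav : a ≠ v := ne_of_mem_of_not_mem ha hvA'
  have haX : a ∉ X := fun h => hXA' a h ha
  simpa [hav, haX] using hv a (hA' ha)

variable [Fintype V]

theorem bddAbove_setOf_card (P : Finset V → Prop) :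
    BddAbove {n | ∃ A : Finset V, #A = n ∧ P A} :=
  ⟨Fintype.card V, fun _ ⟨A, hA, _⟩ => hA ▸ A.card_le_univ⟩

theorem card_le_vcOpen {A : Finset V} (hA : G.IsOpenShattered A) : #A ≤ vcOpen V G :=
  le_csSup (bddAbove_setOf_card _) ⟨A, rfl, hA⟩

theorem card_le_vcClosed {A : Finset V} (hA : G.IsClosedShattered A) : #A ≤ vcClosed V G :=
  le_csSup (bddAbove_setOf_card _) ⟨A, rfl, hA⟩

theorem vcClosed_le {k : ℕ} (h : ∀ A : Finset V, G.IsClosedShattered A → #A ≤ k) :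
    vcClosed V G ≤ k :=
  csSup_le' fun _ ⟨A, hA, hsh⟩ => hA ▸ h A hsh

variable (G)

theorem vcOpen_le_vcClosed : vcOpen V G ≤ vcClosed V G :=
  csSup_le' fun _ ⟨_, hA, hsh⟩ => hA ▸ card_le_vcClosed (IsOpenShattered.isClosedShattered hsh)

theorem vcClosed_le_two_mul_vcOpen_add_one : vcClosed V G ≤ 2 * vcOpen V G + 1 := by
  classical
  refine vcClosed_le fun A hA => ?_
  by_contra! hlarge
  obtain ⟨A', hA'A, hA'⟩ := exists_subset_card_eq (s := A) (n := vcOpen V G + 1) (by omega)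
  have hrest : vcOpen V G + 1 ≤ #(A \ A') := by
    rw [card_sdiff_of_subset hA'A]
    omega
  have hopen : G.IsOpenShattered A' :=
    hA.isOpenShattered_of_card_lt hA'A <|
      hA' ▸ Nat.lt_two_pow_self.trans_le (Nat.pow_le_pow_right two_pos hrest)
  have := card_le_vcOpen hopen
  omega

end SimpleGraph

/-- For every graph `G`, `vc(G) ≤ vc[G] ≤ vc(G)·(vc(G)+1) + 1`. -/
theorem vcOpen_le_vcClosed_le (V : Type) [Fintype V] (G : SimpleGraph V) :
    vcOpen V G ≤ vcClosed V G ∧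
    vcClosed V G ≤ vcOpen V G * (vcOpen V G + 1) + 1 :=
  ⟨G.vcOpen_le_vcClosed, G.vcClosed_le_two_mul_vcOpen_add_one.trans
    (by nlinarith [Nat.le_mul_self (vcOpen V G)])⟩
end

section
/- The bipartite graph W_n, with parts A of size n and B of size 2^n such that the vertices of B have pairwise distinct neighbourhoods in A (hence realize all 2^n subsets of A), contains every bipartite graph on at most n vertices as an induced subgraph. -/
/-- `Wgraph n` : the bipartite graph with parts `Fin n` and `Finset (Fin n)` (of size `2^n`),
where `a : Fin n` is adjacent to `s : Finset (Fin n)` iff `a ∈ s`; thus the vertices of the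
second part realize all `2^n` subsets of the first part. -/
def Wgraph (n : ℕ) : SimpleGraph (Fin n ⊕ Finset (Fin n)) :=
  SimpleGraph.fromRel (fun u v => ∃ a s, u = Sum.inl a ∧ v = Sum.inr s ∧ a ∈ s)

lemma Wgraph_adj_iff {n : ℕ} (a : Fin n) (s : Finset (Fin n)) :
    (Wgraph n).Adj (Sum.inl a) (Sum.inr s) ↔ a ∈ s := by
  simp only [Wgraph, SimpleGraph.fromRel_adj]
  constructor
  · rintro ⟨-, ⟨a', s', h1, h2, h3⟩ | ⟨a', s', h1, h2, h3⟩⟩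
    · cases h1; cases h2; exact h3
    · exact absurd h1 (by simp)
  · intro h
    exact ⟨by simp, Or.inl ⟨a, s, rfl, rfl, h⟩⟩

lemma Wgraph_not_adj_inl {n : ℕ} (a b : Fin n) :
    ¬ (Wgraph n).Adj (Sum.inl a) (Sum.inl b) := by
  simp only [Wgraph, SimpleGraph.fromRel_adj]
  rintro ⟨-, ⟨a', s', h1, h2, h3⟩ | ⟨a', s', h1, h2, h3⟩⟩ <;> simp at h2

lemma Wgraph_not_adj_inr {n : ℕ} (s t : Finset (Fin n)) :
    ¬ (Wgraph n).Adj (Sum.inr s) (Sum.inr t) := by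
  simp only [Wgraph, SimpleGraph.fromRel_adj]
  rintro ⟨-, ⟨a', s', h1, h2, h3⟩ | ⟨a', s', h1, h2, h3⟩⟩ <;> simp at h1

/-- `W_n` contains every bipartite graph on at most `n` vertices as an induced subgraph. -/
theorem Wgraph_universal (n : ℕ) (X : Type) [Fintype X] (H : SimpleGraph X)
    (hbip : ∃ f : X → Bool, ∀ u v, H.Adj u v → f u ≠ f v)
    (hcard : Fintype.card X ≤ n) :
    Nonempty (H ↪g Wgraph n) := by
  classical
  obtain ⟨f, hf⟩ := hbip
  let e : X ↪ Fin n := (Fintype.equivFin X).toEmbedding.trans (Fin.castLEEmb hcard)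
  let S : X → Finset (Fin n) := fun x =>
    insert (e x) ((Finset.univ.filter (fun u => f u = false ∧ H.Adj u x)).image e)
  let F : X → Fin n ⊕ Finset (Fin n) := fun x =>
    if f x = false then Sum.inl (e x) else Sum.inr (S x)
  have hmem : ∀ x y, e x ∈ S y ↔ x = y ∨ (f x = false ∧ H.Adj x y) := by
    intro x y
    simp only [S, Finset.mem_insert, Finset.mem_image, Finset.mem_filter, Finset.mem_univ,
      true_and]
    constructor
    · rintro (h | ⟨u, ⟨hu, hadj⟩, hux⟩)
      · exact Or.inl (e.injective h)
      · cases e.injective hux; exact Or.inr ⟨hu, hadj⟩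
    · rintro (rfl | ⟨h1, h2⟩)
      · exact Or.inl rfl
      · exact Or.inr ⟨x, ⟨h1, h2⟩, rfl⟩
  have hinj : Function.Injective F := by
    intro x y hxy
    simp only [F] at hxy
    by_cases hx : f x = false <;> by_cases hy : f y = false <;>
      simp [hx, hy] at hxy
    · exact hxy
    · have := (hmem x y).mp (hxy ▸ (hmem x x).mpr (Or.inl rfl))
      rcases this with rfl | ⟨h1, _⟩
      · rfl
      · exact absurd h1 hx
  have key : ∀ u v, (Wgraph n).Adj (F u) (F v) ↔ H.Adj u v := by
    intro u v
    by_cases hu : f u = false <;> by_cases hv : f v = false <;> simp only [F]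
    · rw [if_pos hu, if_pos hv]
      constructor
      · intro h; exact absurd h (Wgraph_not_adj_inl _ _)
      · intro h; exact absurd (hu.trans hv.symm) (hf u v h)
    · rw [if_pos hu, if_neg hv]
      rw [Wgraph_adj_iff, hmem]
      constructor
      · rintro (rfl | ⟨_, h⟩)
        · exact absurd hu hv
        · exact h
      · intro h; exact Or.inr ⟨hu, h⟩
    · rw [if_neg hu, if_pos hv]
      constructor
      · intro h
        have h' := ((Wgraph n).adj_symm h)
        rw [Wgraph_adj_iff, hmem] at h'
        rcases h' with rfl | ⟨_, h'⟩
        · exact absurd hv hu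
        · exact h'.symm
      · intro h
        exact ((Wgraph n).adj_symm ((Wgraph_adj_iff _ _).mpr ((hmem v u).mpr
          (Or.inr ⟨hv, h.symm⟩))))
    · rw [if_neg hu, if_neg hv]
      constructor
      · intro h; exact absurd h (Wgraph_not_adj_inr _ _)
      · intro h
        exact absurd ((Bool.not_eq_false _).mp hu |>.trans
          ((Bool.not_eq_false _).mp hv).symm) (hf u v h)
  exact ⟨⟨⟨F, hinj⟩, key _ _⟩⟩
end

section
/- If a vertex set A shatters a vertex set B of size 2^n in a graph G (i.e., for every subset C ⊆ B there is a vertex a ∈ A with N(a) ∩ B = C), then B shatters some subset A* ⊆ A of size n. -/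
/-- If a vertex set `A` shatters a disjoint vertex set `B` of size `2^n` (every subset of `B`
is the intersection of `B` with the neighbourhood of some vertex of `A`), then `B` shatters
some subset `A* ⊆ A` of size `n`. -/
theorem shatter_reverse (V : Type) (G : SimpleGraph V) (n : ℕ) (A B : Finset V)
    (hdisj : Disjoint A B) (hB : B.card = 2 ^ n)
    (hshatter : ∀ C : Finset V, C ⊆ B → ∃ a ∈ A, ∀ b ∈ B, (G.Adj a b ↔ b ∈ C)) :
    ∃ Astar : Finset V, Astar ⊆ A ∧ Astar.card = n ∧
      ∀ C : Finset V, C ⊆ Astar → ∃ b ∈ B, ∀ a ∈ Astar, (G.Adj b a ↔ a ∈ C) := by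
  classical
  have hcard : Fintype.card (↥B) = Fintype.card (Finset (Fin n)) := by
    simp [Fintype.card_coe, hB]
  obtain ⟨e⟩ := Fintype.card_eq.mp hcard
  set C : Fin n → Finset V := fun i => B.filter (fun b => ∃ hb : b ∈ B, i ∈ e ⟨b, hb⟩) with hC
  have hCmem : ∀ i (b : ↥B), (b : V) ∈ C i ↔ i ∈ e b := by
    intro i b
    simp only [hC, Finset.mem_filter]
    constructor
    · rintro ⟨-, hb, h⟩; rwa [show (⟨(b : V), hb⟩ : ↥B) = b from Subtype.ext rfl] at h
    · intro h; exact ⟨b.2, b.2, by rwa [show (⟨(b : V), b.2⟩ : ↥B) = b from Subtype.ext rfl]⟩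
  choose a haA ha using fun i => hshatter (C i) (Finset.filter_subset _ _)
  have hainj : Function.Injective a := by
    intro i j hij
    by_contra hne
    have b := e.symm {i}
    have h1 : (↑(e.symm ({i} : Finset (Fin n))) : V) ∈ C i := by
      rw [hCmem]; simp
    have h2 : (↑(e.symm ({i} : Finset (Fin n))) : V) ∉ C j := by
      rw [hCmem]; simp [Ne.symm hne]
    have hb : (↑(e.symm ({i} : Finset (Fin n))) : V) ∈ B := (e.symm _).2
    have := (ha i _ hb).symm.trans (hij ▸ (ha j _ hb))
    exact h2 (this.mp h1)
  refine ⟨Finset.image a Finset.univ, ?_, ?_, ?_⟩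
  · intro x hx
    obtain ⟨i, -, rfl⟩ := Finset.mem_image.mp hx
    exact haA i
  · rw [Finset.card_image_of_injective _ hainj, Finset.card_univ, Fintype.card_fin]
  · intro Z hZ
    set S : Finset (Fin n) := Finset.univ.filter (fun i => a i ∈ Z) with hS
    refine ⟨(e.symm S : ↥B), (e.symm S).2, ?_⟩
    intro x hx
    obtain ⟨i, -, rfl⟩ := Finset.mem_image.mp hx
    rw [G.adj_comm, ha i _ (e.symm S).2, hCmem i (e.symm S), Equiv.apply_symm_apply]
    simp [hS]
end

section
/- The number of labelled graphs on vertex set {1, ..., n} whose vertices admit a similarity class of size at least n − c is at most binom(n, c) · 2^{binom(c+1, 2) + 1}. -/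
/-- Two vertices are similar if no third vertex is adjacent to exactly one of them. -/
def GraphSimilar {V : Type} (G : SimpleGraph V) (x y : V) : Prop :=
  ∀ z, z ≠ x → z ≠ y → (G.Adj z x ↔ G.Adj z y)

/-!
Let `T` be the complement of a similarity class `S`, so `|T| = c`. As `S` is a clique or an
independent set and all its vertices have the same neighbours outside `S`, a graph in which `S` is
a similarity class is determined by its adjacencies inside `T`, by which vertices of `T` see `S`,
and by whether `S` spans an edge: at most `2^{C(c,2)} · 2^c · 2 = 2^{C(c+1,2)+1}` graphs for each
of the `C(n,c)` choices of `T`.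
-/

open Finset

variable {V : Type} {G H : SimpleGraph V} {S : Set V} {u v : V}

def PairwiseSimilar (G : SimpleGraph V) (S : Set V) : Prop :=
  ∀ x ∈ S, ∀ y ∈ S, GraphSimilar G x y

namespace PairwiseSimilar

theorem mono (h : PairwiseSimilar G S) {T : Set V} (hTS : T ⊆ S) : PairwiseSimilar G T :=
  fun x hx y hy => h x (hTS hx) y (hTS hy)

theorem adj_iff_exists_adj_of_notMem (h : PairwiseSimilar G S) (hu : u ∈ S) (hv : v ∉ S) :
    G.Adj v u ↔ ∃ x ∈ S, G.Adj v x :=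
  ⟨fun hvu => ⟨u, hu, hvu⟩, fun ⟨x, hx, hvx⟩ =>
    (h x hx u hu v (ne_of_mem_of_not_mem hx hv).symm (ne_of_mem_of_not_mem hu hv).symm).mp hvx⟩

theorem adj_iff_exists_adj (h : PairwiseSimilar G S) (hu : u ∈ S) (hv : v ∈ S) (huv : u ≠ v) :
    G.Adj u v ↔ ∃ x ∈ S, ∃ y ∈ S, G.Adj x y := by
  refine ⟨fun huv => ⟨u, hu, v, hv, huv⟩, fun ⟨x, hx, y, hy, hxy⟩ => ?_⟩
  have hx_adj : ∀ w ∈ S, w ≠ x → G.Adj x w := fun w hw hwx => by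
    obtain rfl | hwy := eq_or_ne w y
    · exact hxy
    · exact (h y hy w hw x hxy.ne hwx.symm).mp hxy
  obtain rfl | hux := eq_or_ne u x
  · exact hx_adj v hv huv.symm
  obtain rfl | hvx := eq_or_ne v x
  · exact (hx_adj u hu hux).symm
  exact ((h x hx u hu v hvx huv.symm).mp (hx_adj v hv hvx).symm).symm

theorem ext (hG : PairwiseSimilar G S) (hH : PairwiseSimilar H S)
    (hin : (∃ x ∈ S, ∃ y ∈ S, G.Adj x y) ↔ ∃ x ∈ S, ∃ y ∈ S, H.Adj x y)
    (hcross : ∀ v ∉ S, (∃ x ∈ S, G.Adj v x) ↔ ∃ x ∈ S, H.Adj v x)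
    (hout : ∀ u ∉ S, ∀ v ∉ S, G.Adj u v ↔ H.Adj u v) : G = H := by
  ext u v
  by_cases hu : u ∈ S <;> by_cases hv : v ∈ S
  · obtain rfl | huv := eq_or_ne u v
    · simp
    rw [hG.adj_iff_exists_adj hu hv huv, hH.adj_iff_exists_adj hu hv huv, hin]
  · rw [G.adj_comm, H.adj_comm, hG.adj_iff_exists_adj_of_notMem hu hv,
      hH.adj_iff_exists_adj_of_notMem hu hv, hcross v hv]
  · rw [hG.adj_iff_exists_adj_of_notMem hv hu, hH.adj_iff_exists_adj_of_notMem hv hu, hcross u hu]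
  · exact hout u hu v hv

end PairwiseSimilar

/-- The adjacency matrix of `G` on `T`, except that its diagonal entry at `a` records whether `a`
has a neighbour outside `T`; and whether the complement of `T` spans an edge. -/
def similarityCode [DecidableEq V] (G : SimpleGraph V) (T : Finset V) : (Sym2 T → Prop) × Prop :=
  (Sym2.lift ⟨fun a b => if a = b then ∃ x ∉ T, G.Adj a x else G.Adj a b, fun a b => by
      obtain rfl | hab := eq_or_ne a b
      · rfl
      · simp only [if_neg hab, if_neg hab.symm, G.adj_comm]⟩,
    ∃ x ∉ T, ∃ y ∉ T, G.Adj x y)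

theorem similarityCode_injOn [DecidableEq V] (T : Finset V) :
    Set.InjOn (similarityCode · T) {G | PairwiseSimilar G (↑T)ᶜ} := by
  intro G hG H hH hcode
  have hentry (a b : T) := congrFun (congrArg Prod.fst hcode) s(a, b)
  refine hG.ext hH (congrArg Prod.snd hcode).to_iff (fun v hv => ?_) (fun u hu v hv => ?_)
  · have hvT : v ∈ T := by simpa using hv
    simpa [similarityCode] using hentry ⟨v, hvT⟩ ⟨v, hvT⟩
  · have huT : u ∈ T := by simpa using hu
    have hvT : v ∈ T := by simpa using hv
    obtain rfl | huv := eq_or_ne u v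
    · simp
    simpa [similarityCode, huv] using hentry ⟨u, huT⟩ ⟨v, hvT⟩

theorem card_pairwiseSimilar_compl_le [DecidableEq V] (T : Finset V) :
    Nat.card {G : SimpleGraph V // PairwiseSimilar G (↑T)ᶜ} ≤ 2 ^ ((#T + 1).choose 2 + 1) := by
  classical
  calc Nat.card {G : SimpleGraph V // PairwiseSimilar G (↑T)ᶜ}
      ≤ Nat.card ((Sym2 T → Prop) × Prop) :=
        Nat.card_le_card_of_injective (fun G => similarityCode G.1 T)
          fun G H h => Subtype.ext (similarityCode_injOn T G.2 H.2 h)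
    _ = 2 ^ ((#T + 1).choose 2 + 1) := by
      rw [Nat.card_eq_fintype_card, Fintype.card_prod, Fintype.card_fun, Fintype.card_prop,
        Sym2.card, Fintype.card_coe, pow_succ]

theorem exists_card_eq_pairwiseSimilar_compl [Fintype V] {c : ℕ} {S : Finset V}
    (hc : c ≤ Fintype.card V) (hS : Fintype.card V - c ≤ #S) (hG : PairwiseSimilar G S) :
    ∃ T : Finset V, #T = c ∧ PairwiseSimilar G (↑T)ᶜ := by
  classical
  obtain ⟨T, hST, hT⟩ := exists_superset_card_eq (s := Sᶜ) (by rw [card_compl]; omega) hc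
  exact ⟨T, hT, hG.mono fun x hx => by simpa using mt (@hST x) (by simpa using hx)⟩

/-- The number of labelled graphs on `n` vertices admitting a set of at least `n - c`
pairwise similar vertices (a similarity class of size at least `n - c`) is at most
`C(n,c) · 2^{C(c+1,2)+1}`. -/
theorem count_graphs_with_large_similarity_class (n c : ℕ) (hc : c ≤ n) :
    Nat.card {G : SimpleGraph (Fin n) //
        ∃ S : Finset (Fin n), n - c ≤ S.card ∧ ∀ x ∈ S, ∀ y ∈ S, GraphSimilar G x y}
      ≤ Nat.choose n c * 2 ^ (Nat.choose (c + 1) 2 + 1) := by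
  classical
  have hcover (G : {G : SimpleGraph (Fin n) // ∃ S : Finset (Fin n), n - c ≤ #S ∧
      ∀ x ∈ S, ∀ y ∈ S, GraphSimilar G x y}) :
      ∃ T : {T : Finset (Fin n) // #T = c}, PairwiseSimilar G.1 (↑T.1)ᶜ := by
    obtain ⟨S, hS, hsim⟩ := G.2
    obtain ⟨T, hTc, hT⟩ := exists_card_eq_pairwiseSimilar_compl (c := c) (S := S)
      (by rwa [Fintype.card_fin]) (by rwa [Fintype.card_fin]) hsim
    exact ⟨⟨T, hTc⟩, hT⟩
  choose T hT using hcover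
  calc _ ≤ Nat.card (Σ T : {T : Finset (Fin n) // #T = c},
        {G : SimpleGraph (Fin n) // PairwiseSimilar G (↑T.1)ᶜ}) :=
        Nat.card_le_card_of_injective (fun G => ⟨T G, G.1, hT G⟩)
          fun G H h => Subtype.ext (congrArg (fun p => p.2.1) h)
    _ = ∑ T : {T : Finset (Fin n) // #T = c},
        Nat.card {G : SimpleGraph (Fin n) // PairwiseSimilar G (↑T.1)ᶜ} := Nat.card_sigma
    _ ≤ ∑ _T : {T : Finset (Fin n) // #T = c}, 2 ^ ((c + 1).choose 2 + 1) :=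
        sum_le_sum fun T _ => (card_pairwiseSimilar_compl_le T.1).trans_eq (by rw [T.2])
    _ = n.choose c * 2 ^ ((c + 1).choose 2 + 1) := by
      rw [sum_const, card_univ, Fintype.card_finset_len, Fintype.card_fin, smul_eq_mul]
end

section
/- The number of labelled graphs on vertex set {1, ..., n} with neighbourhood diversity at most k is at most k^n · 2^{binom(k,2) + k}. -/
/-- Two vertices are similar if no third vertex is adjacent to exactly one of them. -/
def NdSimilar {V : Type} (G : SimpleGraph V) (x y : V) : Prop :=
  ∀ z, z ≠ x → z ≠ y → (G.Adj z x ↔ G.Adj z y)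

/-- The neighbourhood diversity of `G`: the number of similarity classes. -/
noncomputable def ndiv {V : Type} (G : SimpleGraph V) : ℕ :=
  Nat.card ↥(Set.range fun v : V => {u : V | NdSimilar G v u})

/-!
Label each vertex by its similarity class, an injection into `Fin k` when `ndiv G ≤ k`. Since
vertices with the same label are similar, two distinct vertices are adjacent iff some pair of
vertices carrying the same two labels is adjacent. Hence `G` is recovered from its labelling
`Fin n → Fin k` together with the set of adjacent label pairs, a subset of `Sym2 (Fin k)`,
which has `C(k,2) + k` elements.
-/

namespace NdSimilar

variable {V : Type} {G : SimpleGraph V}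

theorem adj_of_adj_right {x y y' : V} (h : NdSimilar G y y') (ha : G.Adj x y') (hxy : x ≠ y) :
    G.Adj x y := by
  by_cases hyy : y = y'
  · exact hyy ▸ ha
  · exact (h x hxy (G.ne_of_adj ha)).mpr ha

theorem adj_of_adj {x x' y y' : V} (hx : NdSimilar G x x') (hy : NdSimilar G y y')
    (h : G.Adj x' y') (hxy : x ≠ y) : G.Adj x y := by
  by_cases hx' : x = y'
  · subst hx'
    by_cases hy' : y = x'
    · exact hy' ▸ h.symm
    · have hx'y : G.Adj x' y := hy.adj_of_adj_right h (Ne.symm hy')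
      exact (hx.adj_of_adj_right hx'y.symm (Ne.symm hxy)).symm
  · exact hy.adj_of_adj_right (hx.adj_of_adj_right h.symm (Ne.symm hx')).symm hxy

theorem of_setOf_eq {u u' : V} (h : {w | NdSimilar G u w} = {w | NdSimilar G u' w}) :
    NdSimilar G u u' := by
  have hu' : u' ∈ {w | NdSimilar G u' w} := fun _ _ _ => Iff.rfl
  rwa [← h] at hu'

end NdSimilar

namespace SimpleGraph

variable {V α : Type}

def labelAdj (G : SimpleGraph V) (φ : V → α) : Sym2 α → Prop :=
  fun s => ∃ u v, G.Adj u v ∧ s = s(φ u, φ v)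

theorem adj_iff_labelAdj {G : SimpleGraph V} {φ : V → α}
    (hφ : ∀ u u', φ u = φ u' → NdSimilar G u u') {u v : V} (huv : u ≠ v) :
    G.Adj u v ↔ G.labelAdj φ s(φ u, φ v) := by
  refine ⟨fun h => ⟨u, v, h, rfl⟩, ?_⟩
  rintro ⟨u', v', hadj, hs⟩
  rcases Sym2.eq_iff.mp hs with ⟨hu, hv⟩ | ⟨hu, hv⟩
  · exact (hφ _ _ hu).adj_of_adj (hφ _ _ hv) hadj huv
  · exact (hφ _ _ hu).adj_of_adj (hφ _ _ hv) hadj.symm huv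

theorem eq_of_labelAdj_eq {G G' : SimpleGraph V} {φ : V → α}
    (hG : ∀ u u', φ u = φ u' → NdSimilar G u u') (hG' : ∀ u u', φ u = φ u' → NdSimilar G' u u')
    (h : G.labelAdj φ = G'.labelAdj φ) : G = G' := by
  ext u v
  by_cases huv : u = v
  · simp [huv]
  · rw [adj_iff_labelAdj hG huv, adj_iff_labelAdj hG' huv, h]

theorem exists_labelling_of_ndiv_le [Finite V] {G : SimpleGraph V} {k : ℕ} (hG : ndiv G ≤ k) :
    ∃ φ : V → Fin k, ∀ u u', φ u = φ u' → NdSimilar G u u' := by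
  let e := (Finite.equivFin (Set.range fun v : V => {u : V | NdSimilar G v u})).toEmbedding.trans
    (Fin.castLEEmb hG)
  refine ⟨fun v => e ⟨_, v, rfl⟩, fun u u' h => NdSimilar.of_setOf_eq ?_⟩
  exact congrArg Subtype.val (e.injective h)

end SimpleGraph

theorem card_labelling_data (n k : ℕ) :
    Nat.card ((Fin n → Fin k) × (Sym2 (Fin k) → Prop)) = k ^ n * 2 ^ (k.choose 2 + k) := by
  rw [Nat.card_eq_fintype_card, Fintype.card_prod, Fintype.card_fun, Fintype.card_fun,
    Fintype.card_fin, Fintype.card_fin, Fintype.card_prop, Sym2.card, Fintype.card_fin,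
    Nat.choose_succ_succ, Nat.choose_one_right, Nat.add_comm k]

/-- The number of labelled graphs on `n` vertices with neighbourhood diversity at most `k`
is at most `k^n · 2^{C(k,2)+k}`. -/
theorem count_graphs_with_bounded_diversity (n k : ℕ) :
    Nat.card {G : SimpleGraph (Fin n) // ndiv G ≤ k}
      ≤ k ^ n * 2 ^ (Nat.choose k 2 + k) := by
  choose φ hφ using fun G : {G : SimpleGraph (Fin n) // ndiv G ≤ k} =>
    SimpleGraph.exists_labelling_of_ndiv_le G.2
  have hinj : Function.Injective fun G => (φ G, G.1.labelAdj (φ G)) := by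
    intro G G' h
    obtain ⟨hφG, hlabel⟩ := Prod.mk.inj h
    rw [hφG] at hlabel
    exact Subtype.ext <| SimpleGraph.eq_of_labelAdj_eq (hφG ▸ hφ G) (hφ G') hlabel
  exact card_labelling_data n k ▸ Nat.card_le_card_of_injective _ hinj
end

section
/- If a graph G satisfies μ(G) ≤ k (matching number at most k) and every vertex has c-degree at most k (i.e., min(d(v), d̄(v)) ≤ k for all v), and G has n ≥ 2k(k+2) vertices, then G contains a similarity class of size at least n − 2k(k+1). -/
/-!
The vertex set `C` of a maximum matching has at most `2k` vertices and covers every edge, so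
every vertex outside `C` has all its neighbours in `C`. A vertex `u` of c-degree at most `k` is
adjacent either to at most `k` vertices or to all but at most `k` of them; call the vertices on
the small side the minority of `u`. Discarding the minorities of the vertices of `C` removes at
most `2k · k` vertices from the complement of `C`, and every remaining vertex is adjacent to
exactly the vertices of `C` of degree more than `k`, so the remaining vertices are pairwise
similar.
-/

/-- Two vertices are similar if no third vertex is adjacent to exactly one of them. -/
def VertexSimilar {V : Type} (G : SimpleGraph V) (x y : V) : Prop :=
  ∀ z, z ≠ x → z ≠ y → (G.Adj z x ↔ G.Adj z y)

open Finset

namespace SimpleGraph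

section Matching

variable {V : Type*} {G : SimpleGraph V}

/-- A matching, encoded as a finite set of ordered edges with pairwise disjoint ends. -/
def IsPairMatching (G : SimpleGraph V) (M : Finset (V × V)) : Prop :=
  (∀ p ∈ M, G.Adj p.1 p.2) ∧
    (M : Set (V × V)).Pairwise fun p q => p.1 ≠ q.1 ∧ p.1 ≠ q.2 ∧ p.2 ≠ q.1 ∧ p.2 ≠ q.2

theorem IsPairMatching.card_le {k : ℕ}
    (hk : ∀ (m : ℕ) (e : Fin m → V × V), (∀ i, G.Adj (e i).1 (e i).2) →
      (∀ i j, i ≠ j →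
        (e i).1 ≠ (e j).1 ∧ (e i).1 ≠ (e j).2 ∧ (e i).2 ≠ (e j).1 ∧ (e i).2 ≠ (e j).2) →
      m ≤ k)
    {M : Finset (V × V)} (hM : G.IsPairMatching M) : #M ≤ k :=
  hk _ (fun i => M.equivFin.symm i) (fun i => hM.1 _ (M.equivFin.symm i).2)
    fun _ _ hij => hM.2 (M.equivFin.symm _).2 (M.equivFin.symm _).2
      fun h => hij (M.equivFin.symm.injective (Subtype.ext h))

variable [DecidableEq V]

def endpoints (M : Finset (V × V)) : Finset V :=
  M.image Prod.fst ∪ M.image Prod.snd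

theorem card_endpoints_le (M : Finset (V × V)) : #(endpoints M) ≤ 2 * #M :=
  calc #(endpoints M) ≤ #(M.image Prod.fst) + #(M.image Prod.snd) := card_union_le _ _
    _ ≤ #M + #M := add_le_add card_image_le card_image_le
    _ = 2 * #M := (two_mul _).symm

theorem IsPairMatching.insert {M : Finset (V × V)} (hM : G.IsPairMatching M) {x y : V}
    (hxy : G.Adj x y) (hx : x ∉ endpoints M) (hy : y ∉ endpoints M) :
    G.IsPairMatching (insert (x, y) M) := by
  simp only [endpoints, mem_union, mem_image, not_or, not_exists, not_and] at hx hy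
  refine ⟨forall_mem_insert _ _ _ |>.mpr ⟨hxy, hM.1⟩, ?_⟩
  rw [coe_insert, Set.pairwise_insert]
  exact ⟨hM.2, fun q hq _ => by grind⟩

theorem exists_isVertexCover_card_le [Fintype V] {k : ℕ}
    (hk : ∀ M, G.IsPairMatching M → #M ≤ k) :
    ∃ C : Finset V, G.IsVertexCover C ∧ #C ≤ 2 * k := by
  classical
  obtain ⟨M, hM, hmax⟩ := exists_max_image ({M | G.IsPairMatching M} : Finset (Finset (V × V)))
    card ⟨∅, by simp [IsPairMatching]⟩
  rw [mem_filter_univ] at hM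
  refine ⟨endpoints M, fun x y hxy => ?_,
    (card_endpoints_le M).trans (Nat.mul_le_mul_left 2 (hk M hM))⟩
  by_contra! h
  have hxyM : (x, y) ∉ M := fun hm => h.1 (mem_union_left _ (mem_image_of_mem _ hm))
  have := hmax _ (by simpa using hM.insert hxy h.1 h.2)
  rw [card_insert_of_notMem hxyM] at this
  omega

end Matching

section Minority

variable {V : Type*} [Fintype V] [DecidableEq V] (G : SimpleGraph V) [DecidableRel G.Adj]

def minorityFinset (k : ℕ) (u : V) : Finset V :=
  {v | v ≠ u ∧ (G.Adj u v ↔ G.degree u ≤ k)}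

variable {G}

theorem card_minorityFinset_le {k : ℕ} {u : V}
    (hu : min (G.degree u) (Fintype.card V - 1 - G.degree u) ≤ k) :
    #(G.minorityFinset k u) ≤ k := by
  by_cases hlow : G.degree u ≤ k
  · have : G.minorityFinset k u ⊆ G.neighborFinset u := fun v hv => by
      simp_all [minorityFinset]
    exact (card_le_card this).trans (G.card_neighborFinset_eq_degree u ▸ hlow)
  · have : G.minorityFinset k u ⊆ Gᶜ.neighborFinset u := fun v hv => by
      simp_all [minorityFinset, compl_adj, eq_comm]
    refine (card_le_card this).trans ?_
    rw [card_neighborFinset_eq_degree, degree_compl]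
    omega

theorem adj_iff_of_mem_compl_biUnion_minorityFinset {k : ℕ} {C : Finset V}
    (hC : G.IsVertexCover C) {x : V} (hx : x ∈ Cᶜ \ C.biUnion (G.minorityFinset k)) (z : V) :
    G.Adj z x ↔ z ∈ C ∧ k < G.degree z := by
  simp only [mem_sdiff, mem_compl, mem_biUnion, not_exists, not_and] at hx
  by_cases hz : z ∈ C
  · have := hx.2 z hz
    simp only [minorityFinset, mem_filter_univ, not_and] at this
    have hxz : x ≠ z := fun h => hx.1 (h ▸ hz)
    grind
  · simpa [hz] using fun h => (hC h).elim hz hx.1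

end Minority

end SimpleGraph

open SimpleGraph

theorem exists_large_vertexSimilar_finset {V : Type} [Fintype V] [DecidableEq V]
    {G : SimpleGraph V} [DecidableRel G.Adj] {k : ℕ} {C : Finset V} (hC : G.IsVertexCover C)
    (hdeg : ∀ u, min (G.degree u) (Fintype.card V - 1 - G.degree u) ≤ k) :
    ∃ S : Finset V, Fintype.card V - #C * (k + 1) ≤ #S ∧
      ∀ x ∈ S, ∀ y ∈ S, VertexSimilar G x y := by
  refine ⟨Cᶜ \ C.biUnion (G.minorityFinset k), ?_, fun x hx y hy z _ _ => ?_⟩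
  · have hminority := card_biUnion_le_card_mul C (G.minorityFinset k) k
      fun u _ => card_minorityFinset_le (hdeg u)
    have hS := le_card_sdiff (C.biUnion (G.minorityFinset k)) Cᶜ
    rw [card_compl] at hS
    rw [Nat.mul_succ]
    omega
  · rw [adj_iff_of_mem_compl_biUnion_minorityFinset hC hx,
      adj_iff_of_mem_compl_biUnion_minorityFinset hC hy]

theorem large_similarity_class_general (k n : ℕ) (V : Type) [Fintype V] (G : SimpleGraph V)
    (hcard : Fintype.card V = n)
    (hmatching : ∀ (m : ℕ) (e : Fin m → V × V),
      (∀ i, G.Adj (e i).1 (e i).2) →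
      (∀ i j, i ≠ j →
        (e i).1 ≠ (e j).1 ∧ (e i).1 ≠ (e j).2 ∧ (e i).2 ≠ (e j).1 ∧ (e i).2 ≠ (e j).2) →
      m ≤ k)
    (hcdeg : ∀ v : V,
      min (Nat.card ↥(G.neighborSet v)) (n - 1 - Nat.card ↥(G.neighborSet v)) ≤ k) :
    ∃ S : Finset V, n - 2 * k * (k + 1) ≤ S.card ∧ ∀ x ∈ S, ∀ y ∈ S, VertexSimilar G x y := by
  classical
  obtain ⟨C, hC, hCk⟩ := exists_isVertexCover_card_le fun M hM => hM.card_le hmatching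
  have hdeg (v : V) : min (G.degree v) (Fintype.card V - 1 - G.degree v) ≤ k := by
    simpa only [hcard, Nat.card_eq_fintype_card, card_neighborSet_eq_degree] using hcdeg v
  obtain ⟨S, hS, hsim⟩ := exists_large_vertexSimilar_finset hC hdeg
  refine ⟨S, le_trans ?_ hS, hsim⟩
  rw [hcard]
  exact Nat.sub_le_sub_left (Nat.mul_le_mul_right _ hCk) n

/-- If `G` has `n ≥ 2k(k+2)` vertices, matching number at most `k`, and every vertex has
c-degree at most `k` (i.e. `min(d(v), n-1-d(v)) ≤ k`), then `G` has a similarity class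
(a set of pairwise similar vertices) of size at least `n - 2k(k+1)`. -/
theorem large_similarity_class (k n : ℕ) (V : Type) [Fintype V] (G : SimpleGraph V)
    (hcard : Fintype.card V = n) (hn : 2 * k * (k + 2) ≤ n)
    (hmatching : ∀ (m : ℕ) (e : Fin m → V × V),
      (∀ i, G.Adj (e i).1 (e i).2) →
      (∀ i j, i ≠ j →
        (e i).1 ≠ (e j).1 ∧ (e i).1 ≠ (e j).2 ∧ (e i).2 ≠ (e j).1 ∧ (e i).2 ≠ (e j).2) →
      m ≤ k)
    (hcdeg : ∀ v : V,
      min (Nat.card ↥(G.neighborSet v)) (n - 1 - Nat.card ↥(G.neighborSet v)) ≤ k) :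
    ∃ S : Finset V, n - 2 * k * (k + 1) ≤ S.card ∧ ∀ x ∈ S, ∀ y ∈ S, VertexSimilar G x y :=
  large_similarity_class_general k n V G hcard hmatching hcdeg
end

section
/- Every hereditary class of graphs that contains, for every n, a graph G_n with a clique of size n and an independent set of size n, contains as a subclass either the class S of all graphs partitionable into a clique and a set of isolated vertices, or the class of complements of graphs in S. -/
/-- `G` is partitionable into a clique and a set of isolated vertices. -/
def IsCliquePlusIsolated {V : Type} (G : SimpleGraph V) : Prop :=
  ∃ K : Set V, G.IsClique K ∧ ∀ v ∉ K, ∀ u, ¬ G.Adj v u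

/-!
A graph with a huge clique `s` and a huge independent set `t` contains, after halving `t`
once for each vertex of `s \ t`, a large clique `A` and a large independent set `B` that are
either completely joined or completely disjoint. A graph in `S` embeds into any such pair
with no edges between `A` and `B` (clique into `A`, isolated vertices into `B`), and the
complement of a graph in `S` into any pair with all edges between them. So if the class has
arbitrarily large pairs of the first kind it contains `S`; otherwise, from some size on all
its pairs are of the second kind, and it contains the complements of `S`.
-/

open Finset

/-- `c` is `False` for pairs with no edges between `A` and `B`, `True` for complete ones. -/
def HasCliqueIndepPair {V : Type} (G : SimpleGraph V) (c : Prop) (n : ℕ) : Prop :=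
  ∃ A B : Finset V, Disjoint A B ∧ n ≤ A.card ∧ n ≤ B.card ∧
    G.IsClique (A : Set V) ∧ G.IsIndepSet' (B : Set V) ∧ ∀ a ∈ A, ∀ b ∈ B, (G.Adj a b ↔ c)

theorem HasCliqueIndepPair.mono {V : Type} {G : SimpleGraph V} {c : Prop} {m n : ℕ}
    (h : HasCliqueIndepPair G c n) (hmn : m ≤ n) : HasCliqueIndepPair G c m :=
  let ⟨A, B, hAB, hA, hB, hAcl, hBind, hcross⟩ := h
  ⟨A, B, hAB, hmn.trans hA, hmn.trans hB, hAcl, hBind, hcross⟩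

def IsSplitWith {W : Type} (H : SimpleGraph W) (K : Set W) (c : Prop) : Prop :=
  H.IsClique K ∧ H.IsIndepSet' Kᶜ ∧ ∀ u ∈ K, ∀ v ∉ K, (H.Adj u v ↔ c)

theorem IsCliquePlusIsolated.exists_isSplitWith {W : Type} {H : SimpleGraph W}
    (hH : IsCliquePlusIsolated H) : ∃ K, IsSplitWith H K False := by
  obtain ⟨K, hK, hiso⟩ := hH
  exact ⟨K, hK, fun u hu v _ _ huv => hiso u hu v huv,
    fun u _ v hv => iff_false_intro fun huv => hiso v hv u huv.symm⟩

theorem IsCliquePlusIsolated.exists_isSplitWith_of_compl {W : Type} {H : SimpleGraph W}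
    (hH : IsCliquePlusIsolated Hᶜ) : ∃ K, IsSplitWith H K True := by
  obtain ⟨K, hK, hiso⟩ := hH
  have hadj : ∀ u ∉ K, ∀ v, u ≠ v → H.Adj u v := fun u hu v huv => by
    simpa [SimpleGraph.compl_adj, huv] using hiso u hu v
  refine ⟨Kᶜ, fun u hu v hv huv => hadj u hu v huv, fun u hu v hv huv h => ?_,
    fun u hu v hv => iff_true_intro (hadj u hu v fun h => hv (h ▸ hu))⟩
  exact (hK (not_not.mp hu) (not_not.mp hv) huv).2 h

/-- Each `a ∈ A` splits `B` according to `r a`; recurse into the larger part and put `a` into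
`A₁` or `A₀` accordingly. -/
theorem exists_homogeneous_of_card_le {α β : Type} (r : α → β → Prop) (m n : ℕ)
    (A : Finset α) (B : Finset β) (hA : m ≤ A.card) (hB : n * 2 ^ m ≤ B.card) :
    ∃ A₀ A₁ : Finset α, ∃ B' : Finset β, A₀ ⊆ A ∧ A₁ ⊆ A ∧ B' ⊆ B ∧
      A₀.card + A₁.card = m ∧ n ≤ B'.card ∧
      (∀ a ∈ A₀, ∀ b ∈ B', ¬ r a b) ∧ (∀ a ∈ A₁, ∀ b ∈ B', r a b) := by
  classical
  induction m generalizing A B with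
  | zero =>
    exact ⟨∅, ∅, B, empty_subset _, empty_subset _, Subset.refl _, rfl, by simpa using hB,
      by simp, by simp⟩
  | succ m ih =>
    obtain ⟨a, ha⟩ : A.Nonempty := card_pos.mp (by omega)
    have hA' : m ≤ (A.erase a).card := by rw [card_erase_of_mem ha]; omega
    have hsplit := card_filter_add_card_filter_not (s := B) (r a)
    have haA : ∀ A' ⊆ A.erase a, insert a A' ⊆ A ∧ (insert a A').card = A'.card + 1 :=
      fun A' hA' => ⟨insert_subset ha (hA'.trans (erase_subset _ _)),
        card_insert_of_notMem fun h => (mem_erase.mp (hA' h)).1 rfl⟩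
    have hpow : n * 2 ^ (m + 1) = n * 2 ^ m + n * 2 ^ m := by ring
    rcases (show n * 2 ^ m ≤ (B.filter (r a)).card ∨
        n * 2 ^ m ≤ (B.filter (fun b => ¬ r a b)).card by omega) with h₁ | h₀
    · obtain ⟨A₀, A₁, B', hA₀, hA₁, hB', hcard, hB'card, hneg, hpos⟩ := ih _ _ hA' h₁
      refine ⟨A₀, insert a A₁, B', hA₀.trans (erase_subset _ _), (haA A₁ hA₁).1,
        hB'.trans (filter_subset _ _), by rw [(haA A₁ hA₁).2]; omega, hB'card, hneg, ?_⟩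
      rintro x hx b hb
      rcases mem_insert.mp hx with rfl | hx
      exacts [(mem_filter.mp (hB' hb)).2, hpos x hx b hb]
    · obtain ⟨A₀, A₁, B', hA₀, hA₁, hB', hcard, hB'card, hneg, hpos⟩ := ih _ _ hA' h₀
      refine ⟨insert a A₀, A₁, B', (haA A₀ hA₀).1, hA₁.trans (erase_subset _ _),
        hB'.trans (filter_subset _ _), by rw [(haA A₀ hA₀).2]; omega, hB'card, ?_, hpos⟩
      rintro x hx b hb
      rcases mem_insert.mp hx with rfl | hx
      exacts [(mem_filter.mp (hB' hb)).2, hneg x hx b hb]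

theorem exists_hasCliqueIndepPair {V : Type} {G : SimpleGraph V} {n : ℕ} {s t : Finset V}
    (hs : G.IsClique (s : Set V)) (hscard : 2 * n + 1 ≤ s.card)
    (ht : G.IsIndepSet' (t : Set V)) (htcard : n * 2 ^ (2 * n) + 1 ≤ t.card) :
    HasCliqueIndepPair G False n ∨ HasCliqueIndepPair G True n := by
  classical
  have hst : (s ∩ t).card ≤ 1 := card_le_one.mpr fun a ha b hb => by_contra fun hab =>
    ht (mem_inter.mp ha).2 (mem_inter.mp hb).2 hab (hs (mem_inter.mp ha).1 (mem_inter.mp hb).1 hab)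
  have hs' := card_inter_add_card_sdiff s t
  have ht' := card_inter_add_card_sdiff t s
  rw [inter_comm] at ht'
  obtain ⟨A₀, A₁, B, hA₀, hA₁, hB, hcard, hBcard, hneg, hpos⟩ :=
    exists_homogeneous_of_card_le G.Adj (2 * n) n (s \ t) (t \ s) (by omega) (by omega)
  have hsub : ∀ A ⊆ s \ t, G.IsClique (A : Set V) ∧ Disjoint A B := fun A hA =>
    ⟨hs.subset fun x hx => (mem_sdiff.mp (hA hx)).1, disjoint_sdiff_sdiff.mono hA hB⟩
  have hBind : G.IsIndepSet' (B : Set V) := ht.mono fun x hx => (mem_sdiff.mp (hB hx)).1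
  rcases (show n ≤ A₀.card ∨ n ≤ A₁.card by omega) with h₀ | h₁
  · exact .inl ⟨A₀, B, (hsub A₀ hA₀).2, h₀, hBcard, (hsub A₀ hA₀).1, hBind,
      fun a ha b hb => iff_false_intro (hneg a ha b hb)⟩
  · exact .inr ⟨A₁, B, (hsub A₁ hA₁).2, h₁, hBcard, (hsub A₁ hA₁).1, hBind,
      fun a ha b hb => iff_true_intro (hpos a ha b hb)⟩

theorem IsSplitWith.nonempty_embedding {W V : Type} [Fintype W] {H : SimpleGraph W}
    {G : SimpleGraph V} {K : Set W} {c : Prop} (hH : IsSplitWith H K c)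
    (hG : HasCliqueIndepPair G c (Fintype.card W)) : Nonempty (H ↪g G) := by
  classical
  obtain ⟨A, B, hAB, hA, hB, hAcl, hBind, hcross⟩ := hG
  obtain ⟨eA⟩ : Nonempty (W ↪ A) := Function.Embedding.nonempty_of_card_le (by simpa using hA)
  obtain ⟨eB⟩ : Nonempty (W ↪ B) := Function.Embedding.nonempty_of_card_le (by simpa using hB)
  let f : W → V := fun w => if w ∈ K then eA w else eB w
  have hfA : ∀ w ∈ K, f w ∈ A := fun w hw => by simp [f, hw]
  have hfB : ∀ w ∉ K, f w ∈ B := fun w hw => by simp [f, hw]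
  have hf : Function.Injective f := by
    intro u v huv
    by_cases hu : u ∈ K <;> by_cases hv : v ∈ K
    · simpa [f, hu, hv, Subtype.val_inj] using huv
    · exact (disjoint_left.mp hAB (huv ▸ hfA u hu : f v ∈ A) (hfB v hv)).elim
    · exact (disjoint_left.mp hAB (hfA v hv) (huv ▸ hfB u hu : f v ∈ B)).elim
    · simpa [f, hu, hv, Subtype.val_inj] using huv
  refine ⟨⟨⟨f, hf⟩, fun {u v} => ?_⟩⟩
  change G.Adj (f u) (f v) ↔ H.Adj u v
  obtain ⟨hKcl, hKind, hKcross⟩ := hH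
  by_cases hu : u ∈ K <;> by_cases hv : v ∈ K
  · exact ⟨fun h => hKcl hu hv fun e => G.ne_of_adj h (congrArg f e),
      fun h => hAcl (hfA u hu) (hfA v hv) (hf.ne (H.ne_of_adj h))⟩
  · rw [hcross _ (hfA u hu) _ (hfB v hv), hKcross u hu v hv]
  · rw [G.adj_comm, H.adj_comm, hcross _ (hfA v hv) _ (hfB u hu), hKcross v hv u hu]
  · exact ⟨fun h => absurd h (hBind (hfB u hu) (hfB v hv) (G.ne_of_adj h)),
      fun h => absurd h (hKind hu hv (H.ne_of_adj h))⟩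

theorem IsSplitWith.mem_of_hereditary (C : ∀ V : Type, SimpleGraph V → Prop)
    (hered : ∀ (V W : Type) (G : SimpleGraph V) (H : SimpleGraph W),
      C V G → (H ↪g G) → C W H) {c : Prop}
    (hpairs : ∀ n : ℕ, ∃ (V : Type) (G : SimpleGraph V), C V G ∧ HasCliqueIndepPair G c n)
    {W : Type} [Fintype W] {H : SimpleGraph W} {K : Set W} (hH : IsSplitWith H K c) :
    C W H := by
  obtain ⟨V, G, hC, hG⟩ := hpairs (Fintype.card W)
  exact hered V W G H hC (hH.nonempty_embedding hG).some

/-- Every hereditary class of graphs containing, for every `n`, a graph with a clique of size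
`n` and an independent set of size `n`, contains as a subclass either the class `S` of graphs
partitionable into a clique and isolated vertices, or the class of complements of such
graphs. -/
theorem minimal_classes_complex_number (C : ∀ V : Type, SimpleGraph V → Prop)
    (hered : ∀ (V W : Type) (G : SimpleGraph V) (H : SimpleGraph W),
      C V G → (H ↪g G) → C W H)
    (hbig : ∀ n : ℕ, ∃ (V : Type) (G : SimpleGraph V), C V G ∧
      (∃ s : Finset V, G.IsNClique n s) ∧
      (∃ s : Finset V, s.card = n ∧ G.IsIndepSet' (↑s : Set V))) :
    (∀ (V : Type), Fintype V → ∀ G : SimpleGraph V, IsCliquePlusIsolated G → C V G) ∨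
    (∀ (V : Type), Fintype V → ∀ G : SimpleGraph V, IsCliquePlusIsolated Gᶜ → C V G) := by
  have hpairs : ∀ n : ℕ, (∃ (V : Type) (G : SimpleGraph V), C V G ∧ HasCliqueIndepPair G False n)
      ∨ ∃ (V : Type) (G : SimpleGraph V), C V G ∧ HasCliqueIndepPair G True n := fun n => by
    obtain ⟨V, G, hC, ⟨s, hs⟩, t, htcard, ht⟩ := hbig (n * 2 ^ (2 * n) + 2 * n + 1)
    have hscard := hs.card_eq
    exact (exists_hasCliqueIndepPair hs.isClique (by omega) ht (by omega)).imp
      (⟨V, G, hC, ·⟩) (⟨V, G, hC, ·⟩)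
  by_cases hfalse : ∀ n : ℕ, ∃ (V : Type) (G : SimpleGraph V), C V G ∧
      HasCliqueIndepPair G False n
  · refine .inl fun V _ G hG => ?_
    obtain ⟨K, hK⟩ := hG.exists_isSplitWith
    exact hK.mem_of_hereditary C hered hfalse
  · obtain ⟨n₀, hn₀⟩ := not_forall.mp hfalse
    have htrue : ∀ n : ℕ, ∃ (V : Type) (G : SimpleGraph V), C V G ∧
        HasCliqueIndepPair G True n := fun n => by
      rcases hpairs (max n n₀) with ⟨V, G, hC, hG⟩ | ⟨V, G, hC, hG⟩
      · exact (hn₀ ⟨V, G, hC, hG.mono (le_max_right n n₀)⟩).elim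
      · exact ⟨V, G, hC, hG.mono (le_max_left n n₀)⟩
    refine .inr fun V _ G hG => ?_
    obtain ⟨K, hK⟩ := hG.exists_isSplitWith_of_compl
    exact hK.mem_of_hereditary C hered htrue
end
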